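/- arXiv:1309.3011 — 7 statements merged into one kernel-verified Lean document; each statement's English description precedes it below -/
import Mathlib

section
/- Let R be a commutative ring, let n ≥ 2, and let M be an n×n matrix over R. Fix row indices a < b and column indices c < d of M. Writing Δ^{X,Y} for the determinant of the submatrix of M obtained by deleting the rows in X and the columns in Y (with Δ^{∅,∅} = det M), the following Grassmann–Plücker (Desnanot–Jacobi) relation holds: Δ^{a,c}·Δ^{b,d} = Δ^{a,d}·Δ^{b,c} + Δ^{ab,cd}·Δ^{∅,∅}. -/
namespace CircularPlanar

/-- The increasing enumeration of `Fin (m+1) ∖ {a}`. -/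
def del1 {m : ℕ} (a : Fin (m + 1)) (i : Fin m) : Fin (m + 1) :=
  if i.val < a.val then ⟨i.val, by have := i.isLt; omega⟩
  else ⟨i.val + 1, by have := i.isLt; omega⟩

/-- The increasing enumeration of `Fin (m+2) ∖ {a, b}` (for `a < b`). -/
def del2 {m : ℕ} (a b : Fin (m + 2)) (i : Fin m) : Fin (m + 2) :=
  if i.val < a.val then ⟨i.val, by have := i.isLt; omega⟩
  else if i.val + 1 < b.val then ⟨i.val + 1, by have := i.isLt; omega⟩
  else ⟨i.val + 2, by have := i.isLt; omega⟩

open Matrix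

section Aux

variable {R : Type*} [CommRing R]

theorem aux_det_upd_single {n : ℕ} (A : Matrix (Fin (n+1)) (Fin (n+1)) R) (i j : Fin (n+1)) :
    (A.updateCol j (Pi.single i 1)).det
      = (-1) ^ (i + j : ℕ) * (A.submatrix i.succAbove j.succAbove).det := by
  rw [det_succ_column _ j]
  rw [Fintype.sum_eq_single i fun k hk => ?_]
  · simp [Matrix.submatrix_updateCol_succAbove]
  · simp [Matrix.updateCol_self, Pi.single_eq_of_ne hk]

omit [CommRing R] in
theorem aux_submatrix_updateCol_of {l o : Type*} {n' m' : Type*} [DecidableEq n']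
    [DecidableEq o]
    (A : Matrix m' n' R) (j : n') (u : m' → R) (f : l → m') (g : o → n')
    (hg : Function.Injective g) (j' : o) (hj : g j' = j) :
    (A.updateCol j u).submatrix f g = (A.submatrix f g).updateCol j' (u ∘ f) := by
  ext r s
  by_cases h : s = j'
  · subst h; simp [Matrix.updateCol_apply, hj]
  · rw [Matrix.submatrix_apply, Matrix.updateCol_apply, Matrix.updateCol_apply,
      if_neg h, if_neg (fun hgs => h (hg (hj ▸ hgs))), Matrix.submatrix_apply]

omit [CommRing R] in
theorem aux_updColumn_comm {m' n' : Type*} [DecidableEq n'] (A : Matrix m' n' R) {c d : n'}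
    (h : c ≠ d) (u v : m' → R) :
    (A.updateCol c u).updateCol d v = (A.updateCol d v).updateCol c u := by
  ext i j
  rcases eq_or_ne j d with rfl | hd
  · rw [Matrix.updateCol_self, Matrix.updateCol_ne h.symm, Matrix.updateCol_self]
  · rw [Matrix.updateCol_ne hd, Matrix.updateCol_apply, Matrix.updateCol_apply,
      Matrix.updateCol_ne hd]

theorem aux_det_one_upd_two {n : ℕ} (c d : Fin n) (hcd : c ≠ d) (u v : Fin n → R) :
    (((1 : Matrix (Fin n) (Fin n) R).updateCol c u).updateCol d v).det
      = u c * v d - u d * v c := by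
  set X := ((1 : Matrix (Fin n) (Fin n) R).updateCol c u).updateCol d v with hX
  have hXapp : ∀ i j, X i j = if j = d then v i else if j = c then u i else
      if i = j then 1 else 0 := by
    intro i j
    simp [hX, Matrix.updateCol_apply, Matrix.one_apply]
  rw [Matrix.det_apply]
  rw [← Finset.sum_subset (Finset.subset_univ ({1, Equiv.swap c d} : Finset (Equiv.Perm (Fin n))))]
  · rw [Finset.sum_pair (by
      intro h
      have := congrFun (congrArg (·.toFun) h) c
      simp [Equiv.swap_apply_left] at this
      exact hcd this)]
    have h1 : ∀ (σ : Equiv.Perm (Fin n)), (∏ i, X (σ i) i)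
        = X (σ c) c * X (σ d) d * ∏ i ∈ (Finset.univ \ {c, d}), X (σ i) i := by
      intro σ
      rw [← Finset.prod_sdiff (Finset.subset_univ ({c, d} : Finset (Fin n))),
        Finset.prod_pair hcd]
      ring
    rw [h1, h1]
    have hz : ∀ (σ : Equiv.Perm (Fin n)), (∀ i, i ≠ c → i ≠ d → σ i = i) →
        ∏ i ∈ (Finset.univ \ {c, d}), X (σ i) i = 1 := by
      intro σ hσ
      apply Finset.prod_eq_one
      intro i hi
      simp only [Finset.mem_sdiff, Finset.mem_insert, Finset.mem_singleton, not_or] at hi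
      rw [hσ i hi.2.1 hi.2.2, hXapp, if_neg hi.2.2, if_neg hi.2.1, if_pos rfl]
    rw [hz 1 (by intros; rfl),
      hz (Equiv.swap c d) (fun i h1 h2 => Equiv.swap_apply_of_ne_of_ne h1 h2)]
    simp only [Equiv.Perm.sign_one, Equiv.Perm.sign_swap hcd, Equiv.Perm.one_apply,
      Equiv.swap_apply_left, Equiv.swap_apply_right, Units.val_one, Units.val_neg, one_smul]
    rw [hXapp c c, hXapp d d, hXapp d c, hXapp c d]
    rw [if_neg hcd, if_pos rfl, if_pos rfl, if_neg hcd, if_pos rfl, if_neg hcd.symm, if_pos rfl]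
    simp only [Units.smul_def, zsmul_eq_mul]
    push_cast
    ring
  · intro σ _ hσ
    have hmove : ∃ i, i ≠ c ∧ i ≠ d ∧ σ i ≠ i := by
      by_contra h
      push_neg at h
      apply hσ
      have hc : σ c = c ∨ σ c = d := by
        by_contra h'; push_neg at h'
        exact h'.1 (σ.injective (h (σ c) h'.1 h'.2))
      have hd : σ d = c ∨ σ d = d := by
        by_contra h'; push_neg at h'
        exact h'.2 (σ.injective (h (σ d) h'.1 h'.2))
      simp only [Finset.mem_insert, Finset.mem_singleton]
      rcases hc with hc | hc
      · left
        refine Equiv.ext fun x => ?_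
        rcases eq_or_ne x c with rfl | hxc
        · exact hc
        rcases eq_or_ne x d with rfl | hxd
        · rcases hd with hd | hd
          · exact absurd (σ.injective (hc.trans hd.symm)) hcd
          · exact hd
        · exact h x hxc hxd
      · right
        refine Equiv.ext fun x => ?_
        rcases eq_or_ne x c with rfl | hxc
        · rw [Equiv.swap_apply_left]; exact hc
        rcases eq_or_ne x d with rfl | hxd
        · rw [Equiv.swap_apply_right]
          rcases hd with hd | hd
          · exact hd
          · exact absurd (σ.injective (hc.trans hd.symm)) hcd
        · rw [Equiv.swap_apply_of_ne_of_ne hxc hxd]; exact h x hxc hxd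
    obtain ⟨i, h1, h2, h3⟩ := hmove
    rw [Finset.prod_eq_zero (Finset.mem_univ i), smul_zero]
    rw [hXapp, if_neg h2, if_neg h1, if_neg h3]

theorem aux_key {m : ℕ} (M : Matrix (Fin (m+2)) (Fin (m+2)) R)
    (a b c d : Fin (m+2)) (hab : a < b) (hcd : c < d) :
    M.det * ((M.submatrix a.succAbove c.succAbove).det
        * (M.submatrix b.succAbove d.succAbove).det)
      = M.det * ((M.submatrix a.succAbove d.succAbove).det
          * (M.submatrix b.succAbove c.succAbove).det
        + (M.submatrix (b.succAbove ∘ (⟨a.1, by omega⟩ : Fin (m+1)).succAbove)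
            (d.succAbove ∘ (⟨c.1, by omega⟩ : Fin (m+1)).succAbove)).det * M.det) := by
  have hab' : a ≠ b := ne_of_lt hab
  have hcd' : c ≠ d := ne_of_lt hcd
  set a' : Fin (m+1) := ⟨a.1, by omega⟩ with ha'
  set c' : Fin (m+1) := ⟨c.1, by omega⟩ with hc'
  have hba : b.succAbove a' = a := by
    rw [Fin.succAbove, if_pos (show Fin.castSucc a' < b from hab)]
    exact Fin.ext rfl
  have hdc : d.succAbove c' = c := by
    rw [Fin.succAbove, if_pos (show Fin.castSucc c' < d from hcd)]
    exact Fin.ext rfl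
  set u : Fin (m+2) → R := fun i => adjugate M i a with hu
  set v : Fin (m+2) → R := fun i => adjugate M i b with hv
  set X := ((1 : Matrix (Fin (m+2)) (Fin (m+2)) R).updateCol c u).updateCol d v with hX
  set sa : Fin (m+2) → R := Pi.single a 1 with hsa
  set sb : Fin (m+2) → R := Pi.single b 1 with hsb
  have hMX : M * X = ((M.updateCol c (M.det • sa)).updateCol d (M.det • sb)) := by
    ext i k
    rw [Matrix.mul_apply]
    by_cases hkd : k = d
    · subst hkd
      simp only [hX, Matrix.updateCol_self, Matrix.updateCol_apply, if_pos rfl]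
      have h1 : ∑ j, M i j * v j = (M * adjugate M) i b := by rw [Matrix.mul_apply]
      rw [h1, Matrix.mul_adjugate]
      simp [hsb, Matrix.one_apply, Pi.single_apply, eq_comm]
    · by_cases hkc : k = c
      · subst hkc
        simp only [hX, Matrix.updateCol_ne hkd, Matrix.updateCol_self,
          Matrix.updateCol_apply, if_neg hkd, if_pos rfl]
        have h1 : ∑ j, M i j * u j = (M * adjugate M) i a := by rw [Matrix.mul_apply]
        rw [h1, Matrix.mul_adjugate]
        simp [hsa, Matrix.one_apply, Pi.single_apply, eq_comm]
      · simp only [hX, Matrix.updateCol_ne hkd, Matrix.updateCol_ne hkc,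
          Matrix.one_apply]
        rw [Finset.sum_eq_single k (fun j _ hj => by rw [if_neg hj, mul_zero])
          (fun h => absurd (Finset.mem_univ k) h)]
        simp
  have hL : (M * X).det = M.det * (u c * v d - u d * v c) := by
    rw [Matrix.det_mul, aux_det_one_upd_two c d hcd' u v]
  have hcomp : sa ∘ b.succAbove = Pi.single a' (1 : R) := by
    funext i
    by_cases h : i = a'
    · subst h; rw [Function.comp_apply, hba, hsa]; simp
    · rw [Function.comp_apply, hsa, Pi.single_eq_of_ne h,
        Pi.single_eq_of_ne (fun hh => h (Fin.succAbove_right_injective (hh.trans hba.symm)))]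
  have hsub : (M.updateCol c sa).submatrix b.succAbove d.succAbove
      = (M.submatrix b.succAbove d.succAbove).updateCol c' (Pi.single a' 1) := by
    rw [aux_submatrix_updateCol_of _ c _ _ _ Fin.succAbove_right_injective c' hdc, hcomp]
  set S : R := (-1) ^ (a.1 + b.1 + c.1 + d.1) with hS
  have hR : (M * X).det = M.det * M.det
      * (S * (M.submatrix (b.succAbove ∘ a'.succAbove) (d.succAbove ∘ c'.succAbove)).det) := by
    rw [hMX, Matrix.det_updateCol_smul, aux_updColumn_comm _ hcd',
      Matrix.det_updateCol_smul, aux_updColumn_comm _ hcd'.symm, aux_det_upd_single _ b d,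
      hsub, aux_det_upd_single _ a' c', Matrix.submatrix_submatrix]
    have hac : ((a' : ℕ) + c') = a.1 + c.1 := rfl
    rw [hac]
    have hsgn : ((-1 : R)) ^ (b.1 + d.1) * ((-1 : R)) ^ (a.1 + c.1) = S := by
      rw [hS, ← pow_add]; congr 1; omega
    rw [← hsgn]
    ring
  have hS2 : S * S = 1 := by
    rw [hS, ← pow_add]
    exact Even.neg_one_pow ⟨a.1 + b.1 + c.1 + d.1, rfl⟩
  have huc : u c = (-1 : R) ^ (a.1 + c.1) * (M.submatrix a.succAbove c.succAbove).det :=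
    Matrix.adjugate_fin_succ_eq_det_submatrix M c a
  have hvd : v d = (-1 : R) ^ (b.1 + d.1) * (M.submatrix b.succAbove d.succAbove).det :=
    Matrix.adjugate_fin_succ_eq_det_submatrix M d b
  have hud : u d = (-1 : R) ^ (a.1 + d.1) * (M.submatrix a.succAbove d.succAbove).det :=
    Matrix.adjugate_fin_succ_eq_det_submatrix M d a
  have hvc : v c = (-1 : R) ^ (b.1 + c.1) * (M.submatrix b.succAbove c.succAbove).det :=
    Matrix.adjugate_fin_succ_eq_det_submatrix M c b
  have hdiff : u c * v d - u d * v c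
      = S * ((M.submatrix a.succAbove c.succAbove).det
          * (M.submatrix b.succAbove d.succAbove).det
        - (M.submatrix a.succAbove d.succAbove).det
          * (M.submatrix b.succAbove c.succAbove).det) := by
    rw [huc, hvd, hud, hvc]
    have h1 : ((-1 : R)) ^ (a.1 + c.1) * ((-1 : R)) ^ (b.1 + d.1) = S := by
      rw [hS, ← pow_add]; congr 1; omega
    have h2 : ((-1 : R)) ^ (a.1 + d.1) * ((-1 : R)) ^ (b.1 + c.1) = S := by
      rw [hS, ← pow_add]; congr 1; omega
    calc ((-1:R)) ^ (a.1 + c.1) * (M.submatrix a.succAbove c.succAbove).det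
          * ((-1:R) ^ (b.1 + d.1) * (M.submatrix b.succAbove d.succAbove).det)
        - (-1:R) ^ (a.1 + d.1) * (M.submatrix a.succAbove d.succAbove).det
          * ((-1:R) ^ (b.1 + c.1) * (M.submatrix b.succAbove c.succAbove).det)
        = ((-1:R)) ^ (a.1 + c.1) * ((-1 : R)) ^ (b.1 + d.1)
            * ((M.submatrix a.succAbove c.succAbove).det
              * (M.submatrix b.succAbove d.succAbove).det)
          - ((-1:R)) ^ (a.1 + d.1) * ((-1 : R)) ^ (b.1 + c.1)
            * ((M.submatrix a.succAbove d.succAbove).det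
              * (M.submatrix b.succAbove c.succAbove).det) := by ring
      _ = _ := by rw [h1, h2]; ring
  have h := hL.symm.trans hR
  rw [hdiff] at h
  have h3 : S * S * (M.det * ((M.submatrix a.succAbove c.succAbove).det
        * (M.submatrix b.succAbove d.succAbove).det
      - (M.submatrix a.succAbove d.succAbove).det
        * (M.submatrix b.succAbove c.succAbove).det))
      = S * S * (M.det * M.det
        * (M.submatrix (b.succAbove ∘ a'.succAbove) (d.succAbove ∘ c'.succAbove)).det) := by
    linear_combination S * h
  rw [hS2, one_mul, one_mul] at h3
  linear_combination h3

theorem aux_keyP {m : ℕ} (M : Matrix (Fin (m+2)) (Fin (m+2)) R)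
    (a b c d : Fin (m+2)) (hab : a < b) (hcd : c < d) :
    (M.submatrix a.succAbove c.succAbove).det * (M.submatrix b.succAbove d.succAbove).det
      = (M.submatrix a.succAbove d.succAbove).det * (M.submatrix b.succAbove c.succAbove).det
        + (M.submatrix (b.succAbove ∘ (⟨a.1, by omega⟩ : Fin (m+1)).succAbove)
            (d.succAbove ∘ (⟨c.1, by omega⟩ : Fin (m+1)).succAbove)).det * M.det := by
  set G : Matrix (Fin (m+2)) (Fin (m+2)) (MvPolynomial (Fin (m+2) × Fin (m+2)) ℤ) :=
    Matrix.of fun i j => MvPolynomial.X (i, j) with hG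
  have hGdet : G.det ≠ 0 := by
    intro h
    have h2 := congrArg (MvPolynomial.eval
      (fun p : Fin (m+2) × Fin (m+2) => if p.1 = p.2 then (1:ℤ) else 0)) h
    rw [map_zero, RingHom.map_det] at h2
    have h3 : (MvPolynomial.eval
        (fun p : Fin (m+2) × Fin (m+2) => if p.1 = p.2 then (1:ℤ) else 0)).mapMatrix G
        = (1 : Matrix (Fin (m+2)) (Fin (m+2)) ℤ) := by
      ext i j
      simp [hG, Matrix.one_apply]
    rw [h3, Matrix.det_one] at h2
    exact one_ne_zero h2
  have hP := mul_left_cancel₀ hGdet (aux_key G a b c d hab hcd)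
  set φ : MvPolynomial (Fin (m+2) × Fin (m+2)) ℤ →+* R :=
    (MvPolynomial.eval₂Hom (Int.castRingHom R) (fun p => M p.1 p.2)) with hφ
  have hmapG : φ.mapMatrix G = M := by
    ext i j
    simp [hG, hφ]
  have h2 := congrArg φ hP
  rw [_root_.map_mul, _root_.map_add, _root_.map_mul, _root_.map_mul, RingHom.map_det,
    RingHom.map_det, RingHom.map_det, RingHom.map_det, RingHom.map_det] at h2
  have hsub : ∀ {k : ℕ} (f g : Fin k → Fin (m+2)),
      φ.mapMatrix (G.submatrix f g) = M.submatrix f g := fun f g => by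
    rw [show φ.mapMatrix (G.submatrix f g) = (φ.mapMatrix G).submatrix f g from rfl, hmapG]
  rw [hsub, hsub, hsub, hsub, hsub, RingHom.map_det, hmapG] at h2
  exact h2

theorem del1_eq {m : ℕ} (a : Fin (m + 1)) : del1 a = a.succAbove := by
  funext i
  apply Fin.ext
  simp only [del1, Fin.succAbove, Fin.lt_def, Fin.coe_castSucc, Fin.val_succ]
  split <;> rfl

theorem del2_eq {m : ℕ} (a b : Fin (m + 2)) (hab : a < b) (a' : Fin (m + 1))
    (ha' : a'.val = a.val) : del2 a b = b.succAbove ∘ a'.succAbove := by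
  funext i
  apply Fin.ext
  have hab' : a.1 < b.1 := hab
  have hb : b.1 ≤ m + 1 := by omega
  simp only [del2, Function.comp_apply, Fin.succAbove, Fin.lt_def, Fin.coe_castSucc,
    Fin.val_succ, ha']
  split_ifs <;> simp_all <;> omega

end Aux

theorem statement_0 {R : Type*} [CommRing R] (m : ℕ)
    (M : Matrix (Fin (m + 2)) (Fin (m + 2)) R)
    (a b c d : Fin (m + 2)) (hab : a < b) (hcd : c < d) :
    (M.submatrix (del1 a) (del1 c)).det * (M.submatrix (del1 b) (del1 d)).det =
      (M.submatrix (del1 a) (del1 d)).det * (M.submatrix (del1 b) (del1 c)).det +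
        (M.submatrix (del2 a b) (del2 c d)).det * M.det := by
  rw [del1_eq, del1_eq, del1_eq, del1_eq,
    del2_eq a b hab (⟨a.1, by omega⟩ : Fin (m+1)) rfl,
    del2_eq c d hcd (⟨c.1, by omega⟩ : Fin (m+1)) rfl]
  exact aux_keyP M a b c d hab hcd

end CircularPlanar
end

section
/- Let R be a commutative ring, let n ≥ 2, and let M be an (n+1)×n matrix over R. Fix row indices a < b < c and a column index d of M. Writing Δ^{X,Y} for the determinant of the submatrix of M obtained by deleting the rows in X and the columns in Y, the following Grassmann–Plücker relation holds: Δ^{b,∅}·Δ^{ac,d} = Δ^{a,∅}·Δ^{bc,d} + Δ^{c,∅}·Δ^{ab,d}. -/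
namespace CircularPlanar

lemma del1_val {m : ℕ} (a : Fin (m + 1)) (i : Fin m) :
    (del1 a i).val = if i.val < a.val then i.val else i.val + 1 := by
  simp only [del1]; split_ifs <;> rfl

lemma del2_val {m : ℕ} (a b : Fin (m + 2)) (i : Fin m) :
    (del2 a b i).val = if i.val < a.val then i.val
      else if i.val + 1 < b.val then i.val + 1 else i.val + 2 := by
  simp only [del2]; split_ifs <;> rfl

lemma del1_eq_succAbove {m : ℕ} (a : Fin (m + 1)) : del1 a = Fin.succAbove a := by
  funext i
  simp only [del1, Fin.succAbove, Fin.lt_def, Fin.coe_castSucc]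
  split_ifs <;> rfl

lemma rowRel {R : Type*} [CommRing R] {m : ℕ} (M : Matrix (Fin (m + 1)) (Fin m) R) (j : Fin m) :
    ∑ i : Fin (m + 1), (-1 : R) ^ (i : ℕ) * M i j * (M.submatrix (Fin.succAbove i) id).det = 0 := by
  have h : (Matrix.of fun i k => Fin.cases (M i j) (M i) k :
      Matrix (Fin (m + 1)) (Fin (m + 1)) R).det = 0 :=
    Matrix.det_zero_of_column_eq (Fin.succ_ne_zero j).symm (fun k => by simp)
  rw [Matrix.det_succ_column_zero] at h
  rw [← h]
  refine Finset.sum_congr rfl fun i _ => ?_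
  have h0 : (Matrix.of fun i k => Fin.cases (M i j) (M i) k :
      Matrix (Fin (m + 1)) (Fin (m + 1)) R) i 0 = M i j := by simp
  have h1 : (Matrix.of fun i k => Fin.cases (M i j) (M i) k :
      Matrix (Fin (m + 1)) (Fin (m + 1)) R).submatrix i.succAbove Fin.succ
      = M.submatrix i.succAbove id := by ext p q; simp
  rw [h0, h1]

section
variable {m : ℕ} {a b c : Fin (m + 3)}

lemma hE1 (hab : a < b) (hbc : b < c) (ha : a.val < m + 1) (hb : b.val - 1 < m + 1) :
    del2 b c ∘ del1 (⟨a.val, ha⟩ : Fin (m+1)) = del2 a c ∘ del1 ⟨b.val - 1, hb⟩ := by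
  have h1 : a.val < b.val := hab
  have h2 : b.val < c.val := hbc
  funext i
  have hi := i.isLt
  apply Fin.ext
  simp only [Function.comp_apply, del2_val, del1_val, Fin.val_mk]
  split_ifs <;> omega

lemma hE2 (hab : a < b) (hbc : b < c) (ha : a.val < m + 1) (hc : c.val - 2 < m + 1) :
    del2 b c ∘ del1 (⟨a.val, ha⟩ : Fin (m+1)) = del2 a b ∘ del1 ⟨c.val - 2, hc⟩ := by
  have h1 : a.val < b.val := hab
  have h2 : b.val < c.val := hbc
  funext i
  have hi := i.isLt
  apply Fin.ext
  simp only [Function.comp_apply, del2_val, del1_val, Fin.val_mk]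
  split_ifs <;> omega

lemma hsurj (hab : a < b) (hbc : b < c) (ha : a.val < m + 1)
    (i : Fin (m + 3)) (hia : i ≠ a) (hib : i ≠ b) (hic : i ≠ c) :
    ∃ i0 : Fin m, del2 b c (del1 (⟨a.val, ha⟩ : Fin (m+1)) i0) = i := by
  have h1 : a.val < b.val := hab
  have h2 : b.val < c.val := hbc
  have h3 := c.isLt
  have h4 := i.isLt
  have hia' : i.val ≠ a.val := Fin.val_ne_of_ne hia
  have hib' : i.val ≠ b.val := Fin.val_ne_of_ne hib
  have hic' : i.val ≠ c.val := Fin.val_ne_of_ne hic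
  refine ⟨⟨i.val - ((if a.val < i.val then 1 else 0) + (if b.val < i.val then 1 else 0)
    + (if c.val < i.val then 1 else 0)), by split_ifs <;> omega⟩, ?_⟩
  apply Fin.ext
  simp only [del2_val, del1_val, Fin.val_mk]
  split_ifs <;> omega

end


/-- Bordered matrix: row `x` of `M` on top of the rows of `M` outside `{a,b,c}`,
with column `d` deleted. -/
def Dmat {R : Type*} [CommRing R] {m : ℕ} (M : Matrix (Fin (m + 3)) (Fin (m + 2)) R)
    (b c : Fin (m + 3)) (a' : Fin (m + 1)) (d : Fin (m + 2)) (x : Fin (m + 3)) :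
    Matrix (Fin (m + 1)) (Fin (m + 1)) R :=
  Matrix.of fun p q => Fin.cases (motive := fun _ => R) (M x (del1 d q))
    (fun p0 => M (del2 b c (del1 a' p0)) (del1 d q)) p

def Kmat {R : Type*} [CommRing R] {m : ℕ} (M : Matrix (Fin (m + 3)) (Fin (m + 2)) R)
    (b c : Fin (m + 3)) (a' : Fin (m + 1)) (d : Fin (m + 2)) (j : Fin (m + 1)) :
    Matrix (Fin m) (Fin m) R :=
  Matrix.of fun p q => M (del2 b c (del1 a' p)) (del1 d (j.succAbove q))

set_option maxHeartbeats 2000000 in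
theorem statement_1 {R : Type*} [CommRing R] (m : ℕ)
    (M : Matrix (Fin (m + 3)) (Fin (m + 2)) R)
    (a b c : Fin (m + 3)) (d : Fin (m + 2)) (hab : a < b) (hbc : b < c) :
    (M.submatrix (del1 b) id).det * (M.submatrix (del2 a c) (del1 d)).det =
      (M.submatrix (del1 a) id).det * (M.submatrix (del2 b c) (del1 d)).det +
        (M.submatrix (del1 c) id).det * (M.submatrix (del2 a b) (del1 d)).det := by
  have h1 : a.val < b.val := hab
  have h2 : b.val < c.val := hbc
  have h3 := c.isLt
  set a' : Fin (m + 1) := ⟨a.val, by omega⟩ with ha'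
  set b' : Fin (m + 1) := ⟨b.val - 1, by omega⟩ with hb'
  set c' : Fin (m + 1) := ⟨c.val - 2, by omega⟩ with hc'
  -- the bordered matrix
  have hD : ∀ x, Dmat M b c a' d x = Matrix.of (fun p q => Fin.cases (motive := fun _ => R)
      (M x (del1 d q)) (fun p0 => M (del2 b c (del1 a' p0)) (del1 d q)) p) := fun _ => rfl
  -- g vanishes off {a, b, c}
  have hg0 : ∀ i : Fin (m + 3), i ≠ a → i ≠ b → i ≠ c → (Dmat M b c a' d i).det = 0 := by
    intro i hia hib hic
    obtain ⟨i0, hi0⟩ := hsurj hab hbc (by omega) i hia hib hic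
    refine Matrix.det_zero_of_row_eq (Fin.succ_ne_zero i0).symm ?_
    funext q
    simp only [hD, Matrix.of_apply, Fin.cases_zero, Fin.cases_succ, hi0]
    exact congrArg (fun r => M r (del1 d q)) hi0.symm
  -- values of (Dmat M b c a' d a).dett a, b, c
  have key : ∀ (x : Fin (m + 3)) (x' : Fin (m + 1)) (y z : Fin (m + 3)),
      del2 y z ∘ del1 x' = del2 b c ∘ del1 a' → del2 y z x' = x →
      (Dmat M b c a' d x).det = (-1 : R) ^ (x'.val) * (M.submatrix (del2 y z) (del1 d)).det := by
    intro x x' y z hE hx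
    have hDx : Dmat M b c a' d x = (M.submatrix (del2 y z) (del1 d)).submatrix ⇑(x'.cycleRange)⁻¹ id := by
      ext p q
      refine Fin.cases ?_ (fun j => ?_) p
      · simp only [hD, Matrix.of_apply, Fin.cases_zero, Matrix.submatrix_apply, id_eq,
          Equiv.Perm.inv_def, Fin.cycleRange_symm_zero, hx]
      · simp only [hD, Matrix.of_apply, Fin.cases_succ, Matrix.submatrix_apply, id_eq,
          Equiv.Perm.inv_def, Fin.cycleRange_symm_succ]
        rw [← del1_eq_succAbove, ← Function.comp_apply (f := del2 y z), hE,
          Function.comp_apply]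
    rw [hDx, Matrix.det_permute]
    congr 1
    simp [Fin.sign_cycleRange]
  have hga : (Dmat M b c a' d a).det = (-1 : R) ^ (a.val) * (M.submatrix (del2 b c) (del1 d)).det := by
    have := key a a' b c rfl ?_
    · simpa [ha'] using this
    · apply Fin.ext; simp only [del2_val, ha', Fin.val_mk]; split_ifs <;> omega
  have hgb : (Dmat M b c a' d b).det = (-1 : R) ^ (b.val - 1) * (M.submatrix (del2 a c) (del1 d)).det := by
    have := key b b' a c (hE1 hab hbc (by omega) (by omega)).symm ?_
    · simpa [hb'] using this
    · apply Fin.ext; simp only [del2_val, hb', Fin.val_mk]; split_ifs <;> omega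
  have hgc : (Dmat M b c a' d c).det = (-1 : R) ^ (c.val - 2) * (M.submatrix (del2 a b) (del1 d)).det := by
    have := key c c' a b (hE2 hab hbc (by omega) (by omega)).symm ?_
    · simpa [hc'] using this
    · apply Fin.ext; simp only [del2_val, hc', Fin.val_mk]; split_ifs <;> omega
  -- row expansion of g
  have hK : ∀ j, Kmat M b c a' d j = Matrix.of (fun p q => M (del2 b c (del1 a' p)) (del1 d (j.succAbove q))) := fun _ => rfl
  have hg : ∀ i : Fin (m + 3), (Dmat M b c a' d i).det = ∑ j : Fin (m + 1),
      (-1 : R) ^ (j : ℕ) * M i (del1 d j) * (Kmat M b c a' d j).det := by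
    intro i
    rw [Matrix.det_succ_row_zero]
    refine Finset.sum_congr rfl fun j _ => ?_
    have h0 : Dmat M b c a' d i 0 j = M i (del1 d j) := by simp [hD]
    have h1 : (Dmat M b c a' d i).submatrix Fin.succ j.succAbove = Kmat M b c a' d j := by
      ext p q; simp [hD, hK]
    rw [h0, h1]
  -- the alternating sum is zero
  have hS0 : ∑ i : Fin (m + 3), (-1 : R) ^ (i : ℕ) * (M.submatrix (del1 i) id).det * (Dmat M b c a' d i).det = 0 := by
    calc ∑ i : Fin (m + 3), (-1 : R) ^ (i : ℕ) * (M.submatrix (del1 i) id).det * (Dmat M b c a' d i).det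
        = ∑ i : Fin (m + 3), ∑ j : Fin (m + 1), ((-1 : R) ^ (i : ℕ) * (M.submatrix (del1 i) id).det) *
            ((-1 : R) ^ (j : ℕ) * M i (del1 d j) * (Kmat M b c a' d j).det) := by
          refine Finset.sum_congr rfl fun i _ => ?_
          rw [hg i, Finset.mul_sum]
      _ = ∑ j : Fin (m + 1), ∑ i : Fin (m + 3), ((-1 : R) ^ (i : ℕ) * (M.submatrix (del1 i) id).det) *
            ((-1 : R) ^ (j : ℕ) * M i (del1 d j) * (Kmat M b c a' d j).det) := Finset.sum_comm
      _ = ∑ j : Fin (m + 1), ((-1 : R) ^ (j : ℕ) * (Kmat M b c a' d j).det) *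
            ∑ i : Fin (m + 3), (-1 : R) ^ (i : ℕ) * M i (del1 d j) *
              (M.submatrix (Fin.succAbove i) id).det := by
          refine Finset.sum_congr rfl fun j _ => ?_
          rw [Finset.mul_sum]
          refine Finset.sum_congr rfl fun i _ => ?_
          simp only [del1_eq_succAbove]
          ring
      _ = 0 := by
          refine Finset.sum_eq_zero fun j _ => ?_
          rw [rowRel M (del1 d j), mul_zero]
  -- reduce the sum to three terms
  have hne_ab : a ≠ b := ne_of_lt hab
  have hne_bc : b ≠ c := ne_of_lt hbc
  have hne_ac : a ≠ c := ne_of_lt (lt_trans hab hbc)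
  have hS3 : ∑ i : Fin (m + 3), (-1 : R) ^ (i : ℕ) * (M.submatrix (del1 i) id).det * (Dmat M b c a' d i).det =
      (-1 : R) ^ (a : ℕ) * (M.submatrix (del1 a) id).det * (Dmat M b c a' d a).det + ((-1 : R) ^ (b : ℕ) * (M.submatrix (del1 b) id).det * (Dmat M b c a' d b).det +
        (-1 : R) ^ (c : ℕ) * (M.submatrix (del1 c) id).det * (Dmat M b c a' d c).det) := by
    rw [← Finset.sum_subset (Finset.subset_univ ({a, b, c} : Finset (Fin (m + 3))))
      (fun i _ hi => ?_)]
    · rw [Finset.sum_insert (by simp [hne_ab, hne_ac]),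
        Finset.sum_insert (by simp [hne_bc]), Finset.sum_singleton]
    · simp only [Finset.mem_insert, Finset.mem_singleton, not_or] at hi
      rw [hg0 i hi.1 hi.2.1 hi.2.2, mul_zero]
  rw [hS3] at hS0
  rw [hga, hgb, hgc] at hS0
  -- sign simplification
  have hp1 : (-1 : R) ^ (a.val) * (-1 : R) ^ (a.val) = 1 := by
    rw [← pow_add]; exact Even.neg_one_pow ⟨a.val, rfl⟩
  have hp2 : (-1 : R) ^ (b.val) * (-1 : R) ^ (b.val - 1) = -1 := by
    rw [← pow_add]; exact Odd.neg_one_pow ⟨b.val - 1, by omega⟩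
  have hp3 : (-1 : R) ^ (c.val) * (-1 : R) ^ (c.val - 2) = 1 := by
    rw [← pow_add]; exact Even.neg_one_pow ⟨c.val - 1, by omega⟩
  have hsum' : ((-1 : R) ^ (a.val) * (-1 : R) ^ (a.val)) *
        ((M.submatrix (del1 a) id).det * (M.submatrix (del2 b c) (del1 d)).det) +
      ((-1 : R) ^ (b.val) * (-1 : R) ^ (b.val - 1)) *
        ((M.submatrix (del1 b) id).det * (M.submatrix (del2 a c) (del1 d)).det) +
      ((-1 : R) ^ (c.val) * (-1 : R) ^ (c.val - 2)) *
        ((M.submatrix (del1 c) id).det * (M.submatrix (del2 a b) (del1 d)).det) = 0 := by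
    linear_combination hS0
  rw [hp1, hp2, hp3] at hsum'
  linear_combination -hsum'

end CircularPlanar
end

section
/- Let S be an electrical positroid on n boundary vertices and let (a,b,c;d,e,f) be a circular pair of size 3. If the size-one circular pairs (a;d), (a;f), (b;e), (c;d), (c;f) all lie in S, then (b;f) and (c;e) also lie in S. -/
namespace CircularPlanar

/-- A "pre-pair": an ordered pair of lists of boundary vertices.  The boundary
vertices are labeled by `Fin n`, where `i : Fin n` represents the vertex with
label `i+1`, and the labels `1, …, n` occur in clockwise order. -/
abbrev PrePair (n : ℕ) := List (Fin n) × List (Fin n)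

/-- The identification `(P;Q) ↦ (Q̃;P̃)`. -/
def cpFlip {n : ℕ} (pq : PrePair n) : PrePair n := (pq.2.reverse, pq.1.reverse)

/-- A list of boundary vertices occurs in clockwise cyclic order if some
rotation of it is strictly increasing. -/
def ClockwiseCyclic {n : ℕ} (l : List (Fin n)) : Prop :=
  ∃ k : ℕ, List.Chain' (· < ·) (l.rotate k)

/-- `(P;Q)` is a circular pair if `P`, `Q` are disjoint tuples of boundary
vertices of equal length, and `p_1, …, p_k, q_k, …, q_1` is in clockwise
cyclic order. -/
def IsCircularPair {n : ℕ} (pq : PrePair n) : Prop :=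
  pq.1.length = pq.2.length ∧ pq.1.Nodup ∧ pq.2.Nodup ∧
    (∀ x ∈ pq.1, x ∉ pq.2) ∧ ClockwiseCyclic (pq.1 ++ pq.2.reverse)

/-- The setoid identifying `(P;Q)` with `(Q̃;P̃)`. -/
instance cpSetoid (n : ℕ) : Setoid (PrePair n) where
  r x y := x = y ∨ x = cpFlip y
  iseqv := by
    refine ⟨fun x => Or.inl rfl, ?_, ?_⟩
    · rintro x y (rfl | rfl)
      · exact Or.inl rfl
      · right; simp [cpFlip]
    · rintro x y z (rfl | rfl) (rfl | rfl)
      · exact Or.inl rfl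
      · exact Or.inr rfl
      · exact Or.inr rfl
      · left; simp [cpFlip]

/-- Circular pairs up to the identification `(P;Q) = (Q̃;P̃)`. -/
def CircPair (n : ℕ) := Quotient (cpSetoid n)

/-- The class of a pre-pair. -/
def cp {n : ℕ} (pq : PrePair n) : CircPair n := Quotient.mk (cpSetoid n) pq

/-- The electrical positroid axioms. -/
def ElectricalPositroid (n : ℕ) (S : Set (CircPair n)) : Prop :=
  -- `S` is a set of circular pairs
  (∀ x ∈ S, ∃ pq : PrePair n, IsCircularPair pq ∧ x = cp pq) ∧
  -- Axioms (1a), (1b), (1c)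
  (∀ P Q : List (Fin n), ∀ a b c d : Fin n, IsCircularPair (P, Q) →
    List.Sublist [a, b] P → List.Sublist [c, d] Q →
    ((cp (P.erase a, Q.erase c) ∈ S ∧ cp (P.erase b, Q.erase d) ∈ S →
        (cp (P.erase a, Q.erase d) ∈ S ∧ cp (P.erase b, Q.erase c) ∈ S) ∨
        (cp ((P.erase a).erase b, (Q.erase c).erase d) ∈ S ∧ cp (P, Q) ∈ S)) ∧
     (cp (P.erase a, Q.erase d) ∈ S ∧ cp (P.erase b, Q.erase c) ∈ S →
        cp (P.erase a, Q.erase c) ∈ S ∧ cp (P.erase b, Q.erase d) ∈ S) ∧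
     (cp ((P.erase a).erase b, (Q.erase c).erase d) ∈ S ∧ cp (P, Q) ∈ S →
        cp (P.erase a, Q.erase c) ∈ S ∧ cp (P.erase b, Q.erase d) ∈ S))) ∧
  -- Axioms (2a), (2b), (2c)
  (∀ P Q : List (Fin n), ∀ a b c d : Fin n,
    P.length = Q.length + 1 → ClockwiseCyclic (P ++ Q.reverse) →
    List.Sublist [a, b, c] P → d ∈ Q →
    ((cp (P.erase b, Q) ∈ S ∧ cp ((P.erase a).erase c, Q.erase d) ∈ S →
        (cp (P.erase a, Q) ∈ S ∧ cp ((P.erase b).erase c, Q.erase d) ∈ S) ∨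
        (cp (P.erase c, Q) ∈ S ∧ cp ((P.erase a).erase b, Q.erase d) ∈ S)) ∧
     (cp (P.erase a, Q) ∈ S ∧ cp ((P.erase b).erase c, Q.erase d) ∈ S →
        cp (P.erase b, Q) ∈ S ∧ cp ((P.erase a).erase c, Q.erase d) ∈ S) ∧
     (cp (P.erase c, Q) ∈ S ∧ cp ((P.erase a).erase b, Q.erase d) ∈ S →
        cp (P.erase b, Q) ∈ S ∧ cp ((P.erase a).erase c, Q.erase d) ∈ S))) ∧
  -- Axiom (3): the subset axiom
  (∀ P Q : List (Fin n), IsCircularPair (P, Q) → cp (P, Q) ∈ S →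
    ∀ i : ℕ, i < P.length → cp (P.eraseIdx i, Q.eraseIdx i) ∈ S) ∧
  -- Axiom (4)
  cp (([] : List (Fin n)), ([] : List (Fin n))) ∈ S


lemma clockwiseCyclic_sublist {n : ℕ} {l l' : List (Fin n)} (h : l'.Sublist l)
    (hl : ClockwiseCyclic l) : ClockwiseCyclic l' := by
  obtain ⟨k, hk⟩ := hl
  rcases Nat.eq_zero_or_pos l.length with h0 | hpos
  · have hnil : l = [] := List.length_eq_zero_iff.mp h0
    subst hnil
    have : l' = [] := List.sublist_nil.mp h
    subst this; exact ⟨0, List.isChain_nil⟩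
  · rw [← List.rotate_mod] at hk
    have hk' : k % l.length ≤ l.length := le_of_lt (Nat.mod_lt _ hpos)
    rw [List.rotate_eq_drop_append_take hk'] at hk
    have hl2 : l'.Sublist <| l.take (k % l.length) ++ l.drop (k % l.length) := by
      rwa [List.take_append_drop]
    obtain ⟨s, t, rfl, hs, ht⟩ := List.sublist_append_iff.mp hl2
    refine ⟨s.length, ?_⟩
    have hst : (s ++ t).rotate s.length = t ++ s := by
      rw [List.rotate_eq_drop_append_take (by simp), List.drop_left, List.take_left]
    rw [hst]
    have hpair := List.isChain_iff_pairwise.mp hk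
    exact List.isChain_iff_pairwise.mpr (hpair.sublist (ht.append hs))

theorem statement_10 (n : ℕ) (S : Set (CircPair n))
    (hS : ElectricalPositroid n S) (a b c d e f : Fin n)
    (hcp : IsCircularPair (([a, b, c], [d, e, f]) : PrePair n))
    (had : cp (([a], [d]) : PrePair n) ∈ S)
    (haf : cp (([a], [f]) : PrePair n) ∈ S)
    (hbe : cp (([b], [e]) : PrePair n) ∈ S)
    (hcd : cp (([c], [d]) : PrePair n) ∈ S)
    (hcf : cp (([c], [f]) : PrePair n) ∈ S) :
    cp (([b], [f]) : PrePair n) ∈ S ∧ cp (([c], [e]) : PrePair n) ∈ S := by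
  obtain ⟨h3, hnodP, hnodQ, hdisj, hcyc⟩ := hcp
  simp only [List.nodup_cons, List.mem_cons, List.mem_singleton, List.not_mem_nil,
    or_false, not_or, List.nodup_nil, and_true] at hnodP hnodQ
  obtain ⟨⟨hab, hac⟩, hbc⟩ := hnodP
  obtain ⟨⟨hde, hdf⟩, hef⟩ := hnodQ
  have hdisj' : ∀ x ∈ ([a,b,c] : List (Fin n)), x ∉ ([d,e,f] : List (Fin n)) := hdisj
  simp only [List.mem_cons, List.mem_singleton, List.not_mem_nil, or_false, forall_eq_or_imp,
    forall_eq, not_or] at hdisj'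
  have hcyc' : ClockwiseCyclic ([a, b, c, f, e, d] : List (Fin n)) := hcyc
  obtain ⟨-, hax1, -, -, -⟩ := hS
  -- first application: P = [a,b], Q = [e,f]
  have hsub1 : ([a,b,f,e] : List (Fin n)).Sublist [a,b,c,f,e,d] := by
    refine .cons₂ _ (.cons₂ _ (.cons _ (.cons₂ _ (.cons₂ _ (.cons _ (List.nil_sublist _))))))
  have hcp1 : IsCircularPair (([a,b], [e,f]) : PrePair n) := by
    refine ⟨rfl, by simp [hab], by simp [hef], ?_, ?_⟩
    · intro x hx
      simp only [List.mem_cons, List.mem_singleton, List.not_mem_nil, or_false] at hx ⊢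
      rcases hx with rfl | rfl
      · push_neg; exact ⟨hdisj'.1.2.1, hdisj'.1.2.2⟩
      · push_neg; exact ⟨hdisj'.2.1.2.1, hdisj'.2.1.2.2⟩
    · exact clockwiseCyclic_sublist hsub1 hcyc'
  have h1 := (hax1 [a,b] [e,f] a b e f hcp1 (List.Sublist.refl _) (List.Sublist.refl _)).2.1
  have eA : ([a,b] : List (Fin n)).erase a = [b] := by simp
  have eB : ([a,b] : List (Fin n)).erase b = [a] := by
    rw [List.erase_cons_tail (by simp [hab]), List.erase_cons_head]
  have eE : ([e,f] : List (Fin n)).erase e = [f] := by simp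
  have eF : ([e,f] : List (Fin n)).erase f = [e] := by
    rw [List.erase_cons_tail (by simp [hef]), List.erase_cons_head]
  rw [eA, eB, eE, eF] at h1
  have hbf := h1 ⟨hbe, haf⟩
  -- second application: P = [b,c], Q = [d,e]
  have hsub2 : ([b,c,e,d] : List (Fin n)).Sublist [a,b,c,f,e,d] := by
    refine .cons _ (.cons₂ _ (.cons₂ _ (.cons _ (.cons₂ _ (.cons₂ _ (List.nil_sublist _))))))
  have hcp2 : IsCircularPair (([b,c], [d,e]) : PrePair n) := by
    refine ⟨rfl, by simp [hbc], by simp [hde], ?_, ?_⟩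
    · intro x hx
      simp only [List.mem_cons, List.mem_singleton, List.not_mem_nil, or_false] at hx ⊢
      rcases hx with rfl | rfl
      · push_neg; exact ⟨hdisj'.2.1.1, hdisj'.2.1.2.1⟩
      · push_neg; exact ⟨hdisj'.2.2.1, hdisj'.2.2.2.1⟩
    · exact clockwiseCyclic_sublist hsub2 hcyc'
  have h2 := (hax1 [b,c] [d,e] b c d e hcp2 (List.Sublist.refl _) (List.Sublist.refl _)).2.1
  have eB2 : ([b,c] : List (Fin n)).erase b = [c] := by simp
  have eC2 : ([b,c] : List (Fin n)).erase c = [b] := by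
    rw [List.erase_cons_tail (by simp [hbc]), List.erase_cons_head]
  have eD2 : ([d,e] : List (Fin n)).erase d = [e] := by simp
  have eE2 : ([d,e] : List (Fin n)).erase e = [d] := by
    rw [List.erase_cons_tail (by simp [hde]), List.erase_cons_head]
  rw [eB2, eC2, eD2, eE2] at h2
  have hce := h2 ⟨hcd, hbe⟩
  exact ⟨hbf.1, hce.1⟩


end CircularPlanar
end

section
/- Let S be an electrical positroid on n boundary vertices. Suppose (a_1,…,a_k;b_1,…,b_k) ∈ S, the size-one pair (a_{k+1};b_{k+1}) ∈ S, the vertices a_k, a_{k+1}, b_{k+1}, b_k appear in clockwise order, and (a_1,…,a_{k−1},a_{k+1}; b_1,…,b_{k−1},b_{k+1}) is a circular pair. Then (a_1,…,a_{k−1},a_{k+1}; b_1,…,b_{k−1},b_{k+1}) ∈ S. -/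
namespace CircularPlanar

section Machinery
open List
variable {n : ℕ}


lemma sub_val_of_le' {a x : Fin n} (h : a ≤ x) : ((x - a : Fin n) : ℕ) = x.val - a.val := by
  have hx := x.isLt
  have h' : (a : ℕ) ≤ x := h
  rw [Fin.sub_def]
  show (n - a.val + x.val) % n = _
  have e : n - a.val + x.val = n + (x.val - a.val) := by omega
  rw [e, Nat.add_mod_left, Nat.mod_eq_of_lt (by omega)]

lemma sub_val_of_lt' {a x : Fin n} (h : x < a) : ((x - a : Fin n) : ℕ) = x.val + n - a.val := by
  have hx := x.isLt
  have ha := a.isLt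
  have h' : (x : ℕ) < a := h
  rw [Fin.sub_def]
  show (n - a.val + x.val) % n = _
  rw [Nat.mod_eq_of_lt (by omega)]
  omega

lemma glt_ge_ge {a x y : Fin n} (hx : a ≤ x) (hy : a ≤ y) : x - a < y - a ↔ x < y := by
  rw [Fin.lt_def, Fin.lt_def, sub_val_of_le' hx, sub_val_of_le' hy]
  have h1 : (a : ℕ) ≤ x := hx
  have h2 : (a : ℕ) ≤ y := hy
  omega

lemma glt_lt_lt {a x y : Fin n} (hx : x < a) (hy : y < a) : x - a < y - a ↔ x < y := by
  rw [Fin.lt_def, Fin.lt_def, sub_val_of_lt' hx, sub_val_of_lt' hy]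
  have h1 : (x : ℕ) < a := hx
  have h2 : (y : ℕ) < a := hy
  have := a.isLt
  omega

lemma glt_cross {a x y : Fin n} (hx : a ≤ x) (hy : y < a) : x - a < y - a := by
  rw [Fin.lt_def, sub_val_of_le' hx, sub_val_of_lt' hy]
  have h1 : (a : ℕ) ≤ x := hx
  have h2 : (y : ℕ) < a := hy
  have := x.isLt
  omega

lemma rot_append {α : Type*} (u v : List α) : (u ++ v).rotate u.length = v ++ u := by
  rw [List.rotate_eq_drop_append_take (by simp), List.drop_left, List.take_left]

lemma cc_rotate {l : List (Fin n)} (k : ℕ) : ClockwiseCyclic (l.rotate k) ↔ ClockwiseCyclic l := by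
  rcases eq_or_ne l [] with rfl | hne
  · simp [List.rotate_nil]
  · have h0 : 0 < l.length := List.length_pos_iff.mpr hne
    constructor
    · rintro ⟨j, hj⟩
      exact ⟨k + j, by rwa [← List.rotate_rotate]⟩
    · rintro ⟨j, hj⟩
      refine ⟨l.length - k % l.length + j, ?_⟩
      rw [List.rotate_rotate, ← List.rotate_mod]
      have hd := Nat.div_add_mod k l.length
      have hm : k % l.length < l.length := Nat.mod_lt _ h0
      have hmul : l.length * (k / l.length + 1) = l.length * (k / l.length) + l.length := by ring
      have e : k + (l.length - k % l.length + j) = l.length * (k / l.length + 1) + j := by omega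
      rw [e, Nat.mul_add_mod, List.rotate_mod]
      exact hj

lemma cc_sublist {l' l : List (Fin n)} (hs : l' <+ l) (h : ClockwiseCyclic l) :
    ClockwiseCyclic l' := by
  rcases eq_or_ne l [] with rfl | hne
  · rw [List.sublist_nil.mp hs]; exact h
  · have h0 : 0 < l.length := List.length_pos_iff.mpr hne
    obtain ⟨k, hk⟩ := h
    obtain ⟨k', hk'def⟩ : ∃ k', k % l.length = k' := ⟨_, rfl⟩
    have hlt : k' ≤ l.length := hk'def ▸ le_of_lt (Nat.mod_lt _ h0)
    have hpw : List.Pairwise (· < ·) (l.drop k' ++ l.take k') := by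
      rw [← List.rotate_eq_drop_append_take hlt, ← hk'def, List.rotate_mod]
      exact List.isChain_iff_pairwise.mp hk
    have hsplit : l' <+ l.take k' ++ l.drop k' := by rwa [List.take_append_drop]
    obtain ⟨x, y, rfl, hx, hy⟩ := List.sublist_append_iff.mp hsplit
    refine ⟨x.length, ?_⟩
    rw [rot_append]
    exact List.isChain_iff_pairwise.mpr (hpw.sublist (hy.append hx))

lemma split_lemma (a : Fin n) : ∀ l : List (Fin n),
    List.Pairwise (fun u v => u - a < v - a) l →
    ∃ l₁ l₂, l = l₁ ++ l₂ ∧ (∀ x ∈ l₁, a ≤ x) ∧ (∀ x ∈ l₂, x < a)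
  | [], _ => ⟨[], [], rfl, by simp, by simp⟩
  | x :: t, h => by
    obtain ⟨hx, ht⟩ := List.pairwise_cons.mp h
    rcases le_or_gt a x with hax | hax
    · obtain ⟨l₁, l₂, he, h₁, h₂⟩ := split_lemma a t ht
      refine ⟨x :: l₁, l₂, by rw [he, List.cons_append], ?_, h₂⟩
      rintro y hy
      rcases List.mem_cons.mp hy with rfl | hy
      · exact hax
      · exact h₁ y hy
    · refine ⟨[], x :: t, rfl, by simp, ?_⟩
      intro y hy
      rcases List.mem_cons.mp hy with rfl | hy
      · exact hax
      · by_contra hya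
        push_neg at hya
        have h1 := sub_val_of_lt' hax
        have h2 := sub_val_of_le' hya
        have h3 : ((x - a : Fin n) : ℕ) < ((y - a : Fin n) : ℕ) := hx y hy
        have hxa : (x : ℕ) < a := hax
        have hay : (a : ℕ) ≤ y := hya
        have := y.isLt
        omega

lemma cc_cons_iff (a : Fin n) (l : List (Fin n)) :
    ClockwiseCyclic (a :: l) ↔ List.Pairwise (· < ·) ((a :: l).map (· - a)) := by
  constructor
  · rintro ⟨k, hk⟩
    have h0 : 0 < (a :: l).length := by simp
    set L := a :: l with hL
    obtain ⟨k', hk'def⟩ : ∃ k', k % L.length = k' := ⟨_, rfl⟩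
    have hlt : k' ≤ L.length := hk'def ▸ le_of_lt (Nat.mod_lt _ h0)
    have hpw : List.Pairwise (· < ·) (L.drop k' ++ L.take k') := by
      rw [← List.rotate_eq_drop_append_take hlt, ← hk'def, List.rotate_mod]
      exact List.isChain_iff_pairwise.mp hk
    rw [List.pairwise_append] at hpw
    obtain ⟨pv, pu, cross⟩ := hpw
    -- region facts
    have hregion : (∀ x ∈ L.take k', a ≤ x) ∧ (∀ x ∈ L.drop k', x < a) ∨ k' = 0 := by
      rcases Nat.eq_zero_or_pos k' with h | h
      · exact Or.inr h
      · left
        obtain ⟨k'', rfl⟩ : ∃ k'', k' = k'' + 1 := ⟨k' - 1, by omega⟩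
        have htake : L.take (k'' + 1) = a :: l.take k'' := by rw [hL, List.take_succ_cons]
        constructor
        · intro x hx
          rw [htake] at hx pu
          rcases List.mem_cons.mp hx with rfl | hx
          · exact le_refl _
          · exact le_of_lt ((List.pairwise_cons.mp pu).1 x hx)
        · intro x hx
          have ha : a ∈ L.take (k'' + 1) := by rw [htake]; exact List.mem_cons_self
          exact cross x hx a ha
    rcases hregion with ⟨hu, hv⟩ | h0'
    · have hLsplit : L = L.take k' ++ L.drop k' := (List.take_append_drop _ _).symm
      rw [List.pairwise_map]
      have : List.Pairwise (fun u v => u - a < v - a) (L.take k' ++ L.drop k') := by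
        rw [List.pairwise_append]
        refine ⟨pu.imp_of_mem ?_, pv.imp_of_mem ?_, ?_⟩
        · intro x y hx hy hxy
          exact (glt_ge_ge (hu x hx) (hu y hy)).mpr hxy
        · intro x y hx hy hxy
          exact (glt_lt_lt (hv x hx) (hv y hy)).mpr hxy
        · intro x hx y hy
          exact glt_cross (hu x hx) (hv y hy)
      rwa [← hLsplit] at this
    · -- k' = 0 : the list itself is increasing
      have hpw' : List.Pairwise (· < ·) L := by simpa [h0'] using pv
      have hge : ∀ x ∈ L, a ≤ x := by
        intro x hx
        rw [hL] at hx
        rcases List.mem_cons.mp hx with rfl | hx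
        · exact le_refl _
        · exact le_of_lt ((List.pairwise_cons.mp hpw').1 x hx)
      rw [List.pairwise_map]
      exact hpw'.imp_of_mem (fun {x y} hx hy hxy => (glt_ge_ge (hge x hx) (hge y hy)).mpr hxy)
  · intro h
    rw [List.pairwise_map] at h
    obtain ⟨hhead, hp'⟩ := List.pairwise_cons.mp h
    obtain ⟨l₁, l₂, rfl, h₁, h₂⟩ := split_lemma a l hp'
    have hne : ∀ y ∈ l₁ ++ l₂, y ≠ a := by
      intro y hy hya
      have := hhead y hy
      rw [hya] at this
      exact lt_irrefl _ this
    refine ⟨(a :: l₁).length, ?_⟩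
    have : a :: (l₁ ++ l₂) = (a :: l₁) ++ l₂ := by simp
    rw [this, rot_append]
    refine List.isChain_iff_pairwise.mpr ?_
    rw [List.pairwise_append]
    refine ⟨?_, ?_, ?_⟩
    · refine (hp'.sublist (List.sublist_append_right l₁ l₂)).imp_of_mem ?_
      intro x y hx hy hxy
      exact (glt_lt_lt (h₂ x hx) (h₂ y hy)).mp hxy
    · rw [List.pairwise_cons]
      constructor
      · intro y hy
        exact lt_of_le_of_ne (h₁ y hy) (Ne.symm (hne y (List.mem_append_left _ hy)))
      · refine (hp'.sublist (List.sublist_append_left l₁ l₂)).imp_of_mem ?_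
        intro x y hx hy hxy
        exact (glt_ge_ge (h₁ x hx) (h₁ y hy)).mp hxy
    · intro x hx y hy
      rcases List.mem_cons.mp hy with rfl | hy
      · exact h₂ x hx
      · exact lt_of_lt_of_le (h₂ x hx) (h₁ y hy)


lemma erase_middle {x : Fin n} : ∀ (l r : List (Fin n)), x ∉ l → (l ++ x :: r).erase x = l ++ r
  | [], r, _ => by simp
  | y :: l, r, h => by
    simp only [List.mem_cons, not_or] at h
    rw [List.cons_append, List.erase_cons_tail (by simpa using Ne.symm h.1),
      erase_middle l r h.2, List.cons_append]

lemma eraseIdx_len : ∀ (l r : List (Fin n)), (l ++ r).eraseIdx l.length = l ++ r.eraseIdx 0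
  | [], r => by simp
  | y :: l, r => by
    simp only [List.cons_append, List.length_cons, List.eraseIdx_cons_succ, eraseIdx_len l r]

lemma master {A B : List (Fin n)} {ak bk a' b' : Fin n}
    (hcp : ClockwiseCyclic ((A ++ [ak]) ++ (B ++ [bk]).reverse))
    (hcw : ClockwiseCyclic [ak, a', b', bk]) :
    ClockwiseCyclic (A ++ [ak, a', b', bk] ++ B.reverse) ∧
    (A ++ [ak, a', b', bk] ++ B.reverse).Nodup ∧
    (ak :: a' :: b' :: bk :: (B.reverse ++ A)).Nodup := by
  have e1 : (A ++ [ak]) ++ (B ++ [bk]).reverse = A ++ (ak :: bk :: B.reverse) := by simp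
  rw [e1] at hcp
  have hrot1 : (A ++ (ak :: bk :: B.reverse)).rotate A.length
      = ak :: (bk :: (B.reverse ++ A)) := by
    rw [rot_append]; simp
  have hcc1 : ClockwiseCyclic (ak :: (bk :: (B.reverse ++ A))) := by
    rw [← hrot1]; exact (cc_rotate _).mpr hcp
  have Pw1 := (cc_cons_iff _ _).mp hcc1
  have Pw3 := (cc_cons_iff _ _).mp hcw
  simp only [List.map_cons] at Pw1 Pw3
  obtain ⟨h0all, Pw1'⟩ := List.pairwise_cons.mp Pw1
  obtain ⟨hbkall, Pwrest⟩ := List.pairwise_cons.mp Pw1'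
  have h01 : ak - ak < a' - ak := by
    simp only [List.pairwise_cons] at Pw3; exact Pw3.1 _ (by simp)
  have h12 : a' - ak < b' - ak := by
    simp only [List.pairwise_cons] at Pw3; exact Pw3.2.1 _ (by simp)
  have h23 : b' - ak < bk - ak := by
    simp only [List.pairwise_cons] at Pw3; exact Pw3.2.2.1 _ (by simp)
  have PG : List.Pairwise (· < ·)
      ((ak - ak) :: (a' - ak) :: (b' - ak) :: (bk - ak) :: (B.reverse ++ A).map (· - ak)) := by
    refine List.pairwise_cons.mpr ⟨?_, List.pairwise_cons.mpr ⟨?_,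
      List.pairwise_cons.mpr ⟨?_, Pw1'⟩⟩⟩
    · intro y hy
      rcases List.mem_cons.mp hy with rfl | hy
      · exact h01
      · rcases List.mem_cons.mp hy with rfl | hy
        · exact h01.trans h12
        · rcases List.mem_cons.mp hy with rfl | hy
          · exact (h01.trans h12).trans h23
          · exact ((h01.trans h12).trans h23).trans (hbkall y hy)
    · intro y hy
      rcases List.mem_cons.mp hy with rfl | hy
      · exact h12
      · rcases List.mem_cons.mp hy with rfl | hy
        · exact h12.trans h23
        · exact (h12.trans h23).trans (hbkall y hy)
    · intro y hy
      rcases List.mem_cons.mp hy with rfl | hy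
      · exact h23
      · exact h23.trans (hbkall y hy)
  have hccRT : ClockwiseCyclic (ak :: a' :: b' :: bk :: (B.reverse ++ A)) :=
    (cc_cons_iff _ _).mpr (by simpa using PG)
  have e2 : A ++ [ak, a', b', bk] ++ B.reverse = A ++ ([ak, a', b', bk] ++ B.reverse) := by
    simp
  have hrot2 : (A ++ ([ak, a', b', bk] ++ B.reverse)).rotate A.length
      = ak :: a' :: b' :: bk :: (B.reverse ++ A) := by
    rw [rot_append]; simp
  have hTcc : ClockwiseCyclic (A ++ [ak, a', b', bk] ++ B.reverse) := by
    rw [e2, ← cc_rotate A.length, hrot2]; exact hccRT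
  have hndmap : (((ak :: a' :: b' :: bk :: (B.reverse ++ A)).map (· - ak))).Nodup := by
    have PG' : List.Pairwise (· < ·)
        ((ak :: a' :: b' :: bk :: (B.reverse ++ A)).map (· - ak)) := by simpa using PG
    exact PG'.imp ne_of_lt
  have hndRT : (ak :: a' :: b' :: bk :: (B.reverse ++ A)).Nodup :=
    List.Nodup.of_map _ hndmap
  have hperm : (ak :: a' :: b' :: bk :: (B.reverse ++ A)) ~ A ++ ([ak, a', b', bk] ++ B.reverse) := by
    rw [← hrot2]; exact List.rotate_perm _ _
  exact ⟨hTcc, by rw [e2]; exact hperm.nodup hndRT, hndRT⟩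


lemma cp_flip (p q : List (Fin n)) :
    cp ((q.reverse, p.reverse) : PrePair n) = cp ((p, q) : PrePair n) :=
  Quotient.sound (Or.inr rfl)

lemma isCP_of {T P Q : List (Fin n)} (hT : ClockwiseCyclic T) (hTnd : T.Nodup)
    (hlen : P.length = Q.length) (hsub : P ++ Q.reverse <+ T) :
    IsCircularPair ((P, Q) : PrePair n) := by
  have hnd : (P ++ Q.reverse).Nodup := hTnd.sublist hsub
  have hcc := cc_sublist hsub hT
  rw [List.nodup_append'] at hnd
  exact ⟨hlen, hnd.1, List.nodup_reverse.mp hnd.2.1,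
    fun x hx hx2 => hnd.2.2 hx (List.mem_reverse.mpr hx2), hcc⟩

lemma erase_single {u : Fin n} {X : List (Fin n)} (h : u ∉ X) : (X ++ [u]).erase u = X := by
  have e : X ++ [u] = X ++ u :: [] := rfl
  rw [e, erase_middle _ _ h, List.append_nil]

lemma erase_pair₁ {u v : Fin n} {X : List (Fin n)} (h : u ∉ X) :
    (X ++ [u, v]).erase u = X ++ [v] := by
  have e : X ++ [u, v] = X ++ u :: [v] := rfl
  rw [e, erase_middle _ _ h]

lemma erase_pair₂ {u v : Fin n} {X : List (Fin n)} (h : v ∉ X) (h2 : v ≠ u) :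
    (X ++ [u, v]).erase v = X ++ [u] := by
  have e : X ++ [u, v] = (X ++ [u]) ++ v :: [] := by simp
  rw [e, erase_middle _ _ (by simp [h, h2]), List.append_nil]

end Machinery


open List in
lemma key {n : ℕ} (S : Set (CircPair n)) (hS : ElectricalPositroid n S)
    (ak bk a' b' : Fin n)
    (hone : cp (([a'], [b']) : PrePair n) ∈ S)
    (hcw : ClockwiseCyclic [ak, a', b', bk]) (m : ℕ) :
    ∀ A B : List (Fin n), A.length = m → B.length = m →
      IsCircularPair ((A ++ [ak], B ++ [bk]) : PrePair n) →
      cp ((A ++ [ak], B ++ [bk]) : PrePair n) ∈ S →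
      (cp ((A ++ [a'], B ++ [bk]) : PrePair n) ∈ S ∧
       cp ((A ++ [ak], B ++ [b']) : PrePair n) ∈ S) ∨
      cp ((A ++ [ak, a'], B ++ [bk, b']) : PrePair n) ∈ S := by
  obtain ⟨hS0, hS1, hS2, hS3, hS4⟩ := hS
  induction m with
  | zero =>
    intro A B hA hB hcpl hmeml
    obtain rfl : A = [] := List.length_eq_zero_iff.mp hA
    obtain rfl : B = [] := List.length_eq_zero_iff.mp hB
    simp only [List.nil_append] at hcpl hmeml ⊢
    obtain ⟨hTcc, hTnd, hRTnd⟩ := master (A := []) (B := []) hcpl.2.2.2.2 hcw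
    simp only [List.nil_append, List.reverse_nil, List.append_nil] at hTcc hTnd hRTnd
    simp only [List.nodup_cons, List.mem_cons, List.not_mem_nil, not_or, or_false,
      List.mem_singleton] at hRTnd
    have hcpPQ : IsCircularPair (([ak, a'], [bk, b']) : PrePair n) :=
      isCP_of hTcc hTnd (by simp)
        (by rw [show [ak, a'] ++ ([bk, b'] : List (Fin n)).reverse = [ak, a', b', bk] by simp])
    have ax := hS1 [ak, a'] [bk, b'] ak a' bk b' hcpPQ (List.Sublist.refl _) (List.Sublist.refl _)
    have e1 : [ak, a'].erase ak = [a'] := by simp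
    have e2 : [ak, a'].erase a' = [ak] := by
      rw [List.erase_cons_tail (by simpa using hRTnd.1.1), List.erase_cons_head]
    have e3 : [bk, b'].erase bk = [b'] := by simp
    have e4 : [bk, b'].erase b' = [bk] := by
      rw [List.erase_cons_tail (by simpa using Ne.symm hRTnd.2.2.1), List.erase_cons_head]
    rcases ax.1 ⟨by rw [e1, e3]; exact hone, by rw [e2, e4]; exact hmeml⟩ with ⟨c1, c2⟩ | ⟨-, cA⟩
    · rw [e1, e4] at c1
      rw [e2, e3] at c2
      exact Or.inl ⟨c1, c2⟩
    · exact Or.inr cA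
  | succ m ih =>
    intro A B hA hB hcpl hmeml
    obtain ⟨A'', am, rfl⟩ : ∃ A'' am, A = A'' ++ [am] := by
      rcases List.eq_nil_or_concat A with rfl | ⟨A'', am, h⟩
      · simp at hA
      · exact ⟨A'', am, by rw [h, List.concat_eq_append]⟩
    obtain ⟨B'', bm, rfl⟩ : ∃ B'' bm, B = B'' ++ [bm] := by
      rcases List.eq_nil_or_concat B with rfl | ⟨B'', bm, h⟩
      · simp at hB
      · exact ⟨B'', bm, by rw [h, List.concat_eq_append]⟩
    have hmA : A''.length = m := by simpa using hA
    have hmB : B''.length = m := by simpa using hB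
    obtain ⟨hTcc, hTnd, hRTnd⟩ := master hcpl.2.2.2.2 hcw
    have eT : (A'' ++ [am]) ++ [ak, a', b', bk] ++ ((B'' ++ [bm]) : List (Fin n)).reverse
        = A'' ++ (am :: ak :: a' :: b' :: bk :: bm :: B''.reverse) := by simp
    rw [eT] at hTcc hTnd
    simp only [List.nodup_cons, List.mem_cons, List.mem_append, List.mem_reverse, not_or,
      List.mem_singleton, List.not_mem_nil] at hRTnd
    obtain ⟨⟨hk1, hk2, hk3, ⟨hk4, hk5, -⟩, hk6, hk7, -⟩,
        ⟨ha1, ha2, ⟨ha3, ha4, -⟩, ha5, ha6, -⟩,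
        ⟨hb1, ⟨hb2, hb3, -⟩, hb4, hb5, -⟩,
        ⟨⟨hc1, hc2, -⟩, hc3, hc4, -⟩, hndBA⟩ := hRTnd
    have d1 : a' ∉ A'' ++ [am] := by simp [ha5, ha6]
    have d2 : a' ≠ ak := Ne.symm hk1
    have d3 : b' ∉ B'' ++ [bm] := by simp [hb2, hb3]
    have d4 : b' ≠ bk := hb1
    have d5 : ak ∉ A'' ++ [am] := by simp [hk6, hk7]
    have d6 : bk ∉ B'' ++ [bm] := by simp [hc1, hc2]
    have hndA : (A'' ++ [am]).Nodup := (List.nodup_append.mp hndBA).2.1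
    have hndB : (B'' ++ [bm]).Nodup := List.nodup_reverse.mp (List.nodup_append.mp hndBA).1
    have d7 : am ∉ A'' := fun h => (List.nodup_append'.mp hndA).2.2 h (by simp)
    have d8 : bm ∉ B'' := fun h => (List.nodup_append'.mp hndB).2.2 h (by simp)
    have hAB : cp ((A'' ++ [am] : List (Fin n)), (B'' ++ [bm] : List (Fin n))) ∈ S := by
      have hL : (A'' ++ [am]).length = (B'' ++ [bm]).length := by simp [hmA, hmB]
      have h := hS3 _ _ hcpl hmeml (A'' ++ [am]).length (by simp)
      rw [eraseIdx_len, hL, eraseIdx_len] at h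
      simpa using h
    have hmem'' : cp ((A'' ++ [ak] : List (Fin n)), (B'' ++ [bk] : List (Fin n))) ∈ S := by
      have h := hS3 _ _ hcpl hmeml A''.length (by simp)
      rw [show A'' ++ [am] ++ [ak] = A'' ++ ([am] ++ [ak]) by simp, eraseIdx_len, hmA, ← hmB,
        show B'' ++ [bm] ++ [bk] = B'' ++ ([bm] ++ [bk]) by simp, eraseIdx_len] at h
      simpa using h
    have hcp'' : IsCircularPair ((A'' ++ [ak], B'' ++ [bk]) : PrePair n) := by
      refine isCP_of hTcc hTnd (by simp [hmA, hmB]) ?_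
      rw [show (A'' ++ [ak]) ++ (B'' ++ [bk] : List (Fin n)).reverse
          = A'' ++ (ak :: bk :: B''.reverse) by simp]
      exact List.Sublist.append (List.Sublist.refl A'')
        (((((((List.Sublist.refl B''.reverse).cons bm).cons₂ bk).cons b').cons a').cons₂ ak).cons am)
    have IH := ih A'' B'' hmA hmB hcp'' hmem''
    have hlen3 : (A'' ++ [am] ++ [ak, a']).length = (B'' ++ [bm] ++ [bk]).length + 1 := by
      simp [hmA, hmB]
    have hccPQ3 : ClockwiseCyclic ((A'' ++ [am] ++ [ak, a']) ++ (B'' ++ [bm] ++ [bk]).reverse) := by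
      refine cc_sublist ?_ hTcc
      rw [show (A'' ++ [am] ++ [ak, a']) ++ (B'' ++ [bm] ++ [bk] : List (Fin n)).reverse
          = A'' ++ (am :: ak :: a' :: bk :: bm :: B''.reverse) by simp]
      exact List.Sublist.append (List.Sublist.refl A'')
        ((((((List.Sublist.refl (bm :: B''.reverse)).cons₂ bk).cons b').cons₂ a').cons₂ ak).cons₂ am)
    have hsubP3 : [am, ak, a'] <+ A'' ++ [am] ++ [ak, a'] := by
      rw [show A'' ++ [am] ++ [ak, a'] = A'' ++ [am, ak, a'] by simp]
      exact List.sublist_append_right _ _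
    have eP3a' : (A'' ++ [am] ++ [ak, a']).erase a' = A'' ++ [am] ++ [ak] := erase_pair₂ d1 d2
    have eP3am : (A'' ++ [am] ++ [ak, a']).erase am = A'' ++ [ak, a'] := by
      rw [show A'' ++ [am] ++ [ak, a'] = A'' ++ am :: [ak, a'] by simp, erase_middle _ _ d7]
    have eP3ak : (A'' ++ [am] ++ [ak, a']).erase ak = A'' ++ [am] ++ [a'] := erase_pair₁ d5
    have eP3amak : ((A'' ++ [am] ++ [ak, a']).erase am).erase ak = A'' ++ [a'] := by
      rw [eP3am, erase_pair₁ hk6]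
    have eP3aka' : ((A'' ++ [am] ++ [ak, a']).erase ak).erase a' = A'' ++ [am] := by
      rw [eP3ak, erase_single d1]
    have eQ3bm : (B'' ++ [bm] ++ [bk]).erase bm = B'' ++ [bk] := by
      rw [show B'' ++ [bm] ++ [bk] = B'' ++ bm :: [bk] by simp, erase_middle _ _ d8]
    have eQ3bk : (B'' ++ [bm] ++ [bk]).erase bk = B'' ++ [bm] := erase_single d6
    have hccP2 : ClockwiseCyclic
        ((b' :: bk :: bm :: B''.reverse) ++ (ak :: am :: A''.reverse : List (Fin n)).reverse) := by
      have hccL : ClockwiseCyclic ((A'' ++ [am, ak]) ++ (b' :: bk :: bm :: B''.reverse)) := by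
        refine cc_sublist ?_ hTcc
        rw [show (A'' ++ [am, ak]) ++ (b' :: bk :: bm :: B''.reverse)
            = A'' ++ (am :: ak :: b' :: bk :: bm :: B''.reverse) by simp]
        exact List.Sublist.append (List.Sublist.refl A'')
          ((((List.Sublist.refl (b' :: bk :: bm :: B''.reverse)).cons a').cons₂ ak).cons₂ am)
      have hccR : ClockwiseCyclic ((b' :: bk :: bm :: B''.reverse) ++ (A'' ++ [am, ak])) := by
        rw [← rot_append]
        exact (cc_rotate _).mpr hccL
      rw [show (ak :: am :: A''.reverse : List (Fin n)).reverse = A'' ++ [am, ak] by simp]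
      exact hccR
    have hlen2 : (b' :: bk :: bm :: B''.reverse).length = (ak :: am :: A''.reverse).length + 1 := by
      simp [hmA, hmB]
    have hsubP2 : [b', bk, bm] <+ b' :: bk :: bm :: B''.reverse :=
      List.sublist_append_left [b', bk, bm] B''.reverse
    have f1 : (b' :: bk :: bm :: B''.reverse).erase b' = bk :: bm :: B''.reverse :=
      List.erase_cons_head _ _
    have f2 : (b' :: bk :: bm :: B''.reverse).erase bk = b' :: bm :: B''.reverse := by
      rw [List.erase_cons_tail (by simpa using hb1), List.erase_cons_head]
    have f3 : (b' :: bm :: B''.reverse).erase bm = b' :: B''.reverse := by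
      rw [List.erase_cons_tail (by simpa using hb3), List.erase_cons_head]
    have f4 : (ak :: am :: A''.reverse).erase am = ak :: A''.reverse := by
      rw [List.erase_cons_tail (by simpa using hk7), List.erase_cons_head]
    have f5 : (b' :: bk :: bm :: B''.reverse).erase bm = b' :: bk :: B''.reverse := by
      rw [List.erase_cons_tail (by simpa using hb3), List.erase_cons_tail (by simpa using hc2),
        List.erase_cons_head]
    have f6 : (bk :: bm :: B''.reverse).erase bk = bm :: B''.reverse := List.erase_cons_head _ _
    have f7 : (ak :: am :: A''.reverse).erase ak = am :: A''.reverse := List.erase_cons_head _ _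
    have g1 : cp ((bk :: bm :: B''.reverse : List (Fin n)), ak :: am :: A''.reverse)
        = cp ((A'' ++ [am] ++ [ak] : List (Fin n)), B'' ++ [bm] ++ [bk]) := by
      have h := cp_flip (A'' ++ [am] ++ [ak]) (B'' ++ [bm] ++ [bk])
      rw [show (B'' ++ [bm] ++ [bk] : List (Fin n)).reverse = bk :: bm :: B''.reverse by simp,
        show (A'' ++ [am] ++ [ak] : List (Fin n)).reverse = ak :: am :: A''.reverse by simp] at h
      exact h
    have g2 : cp ((b' :: B''.reverse : List (Fin n)), ak :: A''.reverse)
        = cp ((A'' ++ [ak] : List (Fin n)), B'' ++ [b']) := by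
      have h := cp_flip (A'' ++ [ak]) (B'' ++ [b'])
      rw [show (B'' ++ [b'] : List (Fin n)).reverse = b' :: B''.reverse by simp,
        show (A'' ++ [ak] : List (Fin n)).reverse = ak :: A''.reverse by simp] at h
      exact h
    have g3 : cp ((b' :: bm :: B''.reverse : List (Fin n)), ak :: am :: A''.reverse)
        = cp ((A'' ++ [am] ++ [ak] : List (Fin n)), B'' ++ [bm] ++ [b']) := by
      have h := cp_flip (A'' ++ [am] ++ [ak]) (B'' ++ [bm] ++ [b'])
      rw [show (B'' ++ [bm] ++ [b'] : List (Fin n)).reverse = b' :: bm :: B''.reverse by simp,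
        show (A'' ++ [am] ++ [ak] : List (Fin n)).reverse = ak :: am :: A''.reverse by simp] at h
      exact h
    have g4 : cp ((b' :: bk :: B''.reverse : List (Fin n)), ak :: am :: A''.reverse)
        = cp ((A'' ++ [am] ++ [ak] : List (Fin n)), B'' ++ [bk, b']) := by
      have h := cp_flip (A'' ++ [am] ++ [ak]) (B'' ++ [bk, b'])
      rw [show (B'' ++ [bk, b'] : List (Fin n)).reverse = b' :: bk :: B''.reverse by simp,
        show (A'' ++ [am] ++ [ak] : List (Fin n)).reverse = ak :: am :: A''.reverse by simp] at h
      exact h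
    have g5 : cp ((bm :: B''.reverse : List (Fin n)), am :: A''.reverse)
        = cp ((A'' ++ [am] : List (Fin n)), B'' ++ [bm]) := by
      have h := cp_flip (A'' ++ [am]) (B'' ++ [bm])
      rw [show (B'' ++ [bm] : List (Fin n)).reverse = bm :: B''.reverse by simp,
        show (A'' ++ [am] : List (Fin n)).reverse = am :: A''.reverse by simp] at h
      exact h
    rcases IH with ⟨h1, h2⟩ | hW
    · have ax := hS2 (A'' ++ [am] ++ [ak, a']) (B'' ++ [bm] ++ [bk]) am ak a' bm hlen3 hccPQ3
        hsubP3 (by simp)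
      have c1 := (ax.2.2 ⟨by rw [eP3a']; exact hmeml, by rw [eP3amak, eQ3bm]; exact h1⟩).1
      rw [eP3ak] at c1
      have ax2 := hS2 (b' :: bk :: bm :: B''.reverse) (ak :: am :: A''.reverse) b' bk bm am
        hlen2 hccP2 hsubP2 (by simp)
      have c2 := (ax2.2.1 ⟨by rw [f1, g1]; exact hmeml, by rw [f2, f3, f4, g2]; exact h2⟩).1
      rw [f2, g3] at c2
      exact Or.inl ⟨c1, c2⟩
    · have hcpPQ : IsCircularPair ((A'' ++ [am] ++ [ak, a'], B'' ++ [bm] ++ [bk, b']) : PrePair n) := by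
        refine isCP_of hTcc hTnd (by simp [hmA, hmB]) ?_
        rw [show (A'' ++ [am] ++ [ak, a']) ++ (B'' ++ [bm] ++ [bk, b'] : List (Fin n)).reverse
            = A'' ++ (am :: ak :: a' :: b' :: bk :: bm :: B''.reverse) by simp]
      have sub1 : [am, a'] <+ A'' ++ [am] ++ [ak, a'] := by
        rw [show A'' ++ [am] ++ [ak, a'] = A'' ++ [am, ak, a'] by simp]
        exact (((List.Sublist.refl [a']).cons ak).cons₂ am).trans (List.sublist_append_right A'' _)
      have sub2 : [bm, b'] <+ B'' ++ [bm] ++ [bk, b'] := by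
        rw [show B'' ++ [bm] ++ [bk, b'] = B'' ++ [bm, bk, b'] by simp]
        exact (((List.Sublist.refl [b']).cons bk).cons₂ bm).trans (List.sublist_append_right B'' _)
      have eQ4bm : (B'' ++ [bm] ++ [bk, b']).erase bm = B'' ++ [bk, b'] := by
        rw [show B'' ++ [bm] ++ [bk, b'] = B'' ++ bm :: [bk, b'] by simp, erase_middle _ _ d8]
      have eQ4b' : (B'' ++ [bm] ++ [bk, b']).erase b' = B'' ++ [bm] ++ [bk] := erase_pair₂ d3 d4
      have ax := hS1 (A'' ++ [am] ++ [ak, a']) (B'' ++ [bm] ++ [bk, b']) am a' bm b' hcpPQ sub1 sub2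
      rcases ax.1 ⟨by rw [eP3am, eQ4bm]; exact hW, by rw [eP3a', eQ4b']; exact hmeml⟩ with
        ⟨hM1, hM2⟩ | ⟨-, hPQ⟩
      · rw [eP3am, eQ4b'] at hM1
        rw [eP3a', eQ4bm] at hM2
        have ax3 := hS2 (A'' ++ [am] ++ [ak, a']) (B'' ++ [bm] ++ [bk]) am ak a' bk hlen3 hccPQ3
          hsubP3 (by simp)
        have c1 := (ax3.2.1 ⟨by rw [eP3am]; exact hM1, by rw [eP3aka', eQ3bk]; exact hAB⟩).1
        rw [eP3ak] at c1
        have ax4 := hS2 (b' :: bk :: bm :: B''.reverse) (ak :: am :: A''.reverse) b' bk bm ak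
          hlen2 hccP2 hsubP2 (by simp)
        have c2 := (ax4.2.2 ⟨by rw [f5, g4]; exact hM2, by rw [f1, f6, f7, g5]; exact hAB⟩).1
        rw [f2, g3] at c2
        exact Or.inl ⟨c1, c2⟩
      · exact Or.inr hPQ

theorem statement_11 (n : ℕ) (S : Set (CircPair n))
    (hS : ElectricalPositroid n S) (A B : List (Fin n)) (ak bk a' b' : Fin n)
    (hcp : IsCircularPair ((A ++ [ak], B ++ [bk]) : PrePair n))
    (hmem : cp ((A ++ [ak], B ++ [bk]) : PrePair n) ∈ S)
    (hone : cp (([a'], [b']) : PrePair n) ∈ S)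
    (hcw : ClockwiseCyclic [ak, a', b', bk])
    (hcp' : IsCircularPair ((A ++ [a'], B ++ [b']) : PrePair n)) :
    cp ((A ++ [a'], B ++ [b']) : PrePair n) ∈ S := by
  have hS' := hS
  obtain ⟨hS0, hS1, hS2, hS3, hS4⟩ := hS'
  have hlen : A.length = B.length := by
    have := hcp.1
    simpa using this
  have hKey := key S hS ak bk a' b' hone hcw A.length A B rfl hlen.symm hcp hmem
  obtain ⟨hTcc, hTnd, hRTnd⟩ := master hcp.2.2.2.2 hcw
  simp only [List.nodup_cons, List.mem_cons, List.mem_append, List.mem_reverse, not_or] at hRTnd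
  obtain ⟨⟨hk1, hk2, hk3, hk4, hk5⟩, ⟨ha1, ha2, ha3, ha4⟩, ⟨hb1, hb2, hb3⟩, ⟨hc1, hc2⟩, hndBA⟩ :=
    hRTnd
  have hAB : cp ((A, B) : PrePair n) ∈ S := by
    have h := hS3 _ _ hcp hmem A.length (by simp)
    rw [eraseIdx_len, hlen, eraseIdx_len] at h
    simpa using h
  have hcpPQ : IsCircularPair ((A ++ [ak, a'], B ++ [bk, b']) : PrePair n) := by
    refine isCP_of hTcc hTnd (by simp [hlen]) ?_
    rw [show (A ++ [ak, a']) ++ (B ++ [bk, b'] : List (Fin n)).reverse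
        = A ++ [ak, a', b', bk] ++ B.reverse by simp]
  have ax := hS1 (A ++ [ak, a']) (B ++ [bk, b']) ak a' bk b' hcpPQ
    (List.sublist_append_right A [ak, a']) (List.sublist_append_right B [bk, b'])
  have eak : (A ++ [ak, a']).erase ak = A ++ [a'] := erase_pair₁ hk5
  have ea' : (A ++ [ak, a']).erase a' = A ++ [ak] := erase_pair₂ ha4 (Ne.symm hk1)
  have ebk : (B ++ [bk, b']).erase bk = B ++ [b'] := erase_pair₁ hc1
  have eb' : (B ++ [bk, b']).erase b' = B ++ [bk] := erase_pair₂ hb2 hb1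
  have eaa : ((A ++ [ak, a']).erase ak).erase a' = A := by rw [eak, erase_single ha4]
  have ebb : ((B ++ [bk, b']).erase bk).erase b' = B := by rw [ebk, erase_single hb2]
  rcases hKey with ⟨h1, h2⟩ | hW
  · have h := (ax.2.1 ⟨by rw [eak, eb']; exact h1, by rw [ea', ebk]; exact h2⟩).1
    rwa [eak, ebk] at h
  · have h := (ax.2.2 ⟨by rw [eaa, ebb]; exact hAB, hW⟩).1
    rwa [eak, ebk] at h

end CircularPlanar
end

section
/- Let S be an electrical positroid on n boundary vertices, and let (P;Q)=(a_1,…,a_k;b_1,…,b_k) be a circular pair with 1,n ∉ P∪Q such that (P+1;Q+n) is a circular pair. If (P;Q) is complete with respect to S (that is, (P;Q) ∈ S and (P+1;Q+n) ∈ S), then for every i with 1 ≤ i ≤ k, the pair (P−a_i;Q−b_i) is also complete with respect to S (that is, (P−a_i;Q−b_i) ∈ S and ((P−a_i)+1;(Q−b_i)+n) ∈ S). -/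
namespace CircularPlanar

/-- The boundary vertex labeled `1`. -/
def firstV (n : ℕ) (hn : 0 < n) : Fin n := ⟨0, hn⟩

/-- The boundary vertex labeled `n`. -/
def lastV (n : ℕ) (hn : 0 < n) : Fin n := ⟨n - 1, by omega⟩

/-- `InsPair P Q x y pq` says that `pq` is a circular pair representing
`(P+x; Q+y)`: its tuples consist of `x` inserted into `P` resp. `y` inserted
into `Q`. -/
def InsPair {n : ℕ} (P Q : List (Fin n)) (x y : Fin n) (pq : PrePair n) : Prop :=
  IsCircularPair pq ∧ pq.1.Perm (x :: P) ∧ pq.2.Perm (y :: Q)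


section
open List

lemma chain'_of_rotate {α : Type*} [LinearOrder α] (l : List α) (m r : ℕ)
    (hlen : l.length = 2 * m) (hm : 0 < m)
    (hr : List.Chain' (· < ·) (l.rotate r))
    (x y : α) (hx : x ∈ l.take m) (hy : y ∈ l.drop m)
    (hmin : ∀ z ∈ l, x ≤ z) (hmax : ∀ z ∈ l, z ≤ y) :
    List.Chain' (· < ·) l := by
  have hlpos : 0 < l.length := by omega
  set r' := r % l.length with hr'def
  have hrlt : r' < l.length := Nat.mod_lt _ hlpos
  set s := l.rotate r' with hs
  have hcs : Chain' (· < ·) s := by rw [hs, hr'def, List.rotate_mod]; exact hr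
  have hslen : s.length = l.length := List.length_rotate l r'
  have hps : Pairwise (· < ·) s := List.isChain_iff_pairwise.mp hcs
  have hnods : s.Nodup := hps.imp ne_of_lt
  have hnodl : l.Nodup := (List.rotate_perm l r').nodup_iff.mp hnods
  obtain ⟨a, t, hst⟩ : ∃ a t, s = a :: t :=
    List.exists_cons_of_ne_nil (by intro h; rw [h] at hslen; simp at hslen; omega)
  have hmems : ∀ z : α, z ∈ s ↔ z ∈ l := fun z => List.mem_rotate
  have hax : a = x := by
    have hxs : x ∈ s := (hmems x).mpr (List.mem_of_mem_take hx)
    rw [hst] at hxs hps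
    rcases List.mem_cons.mp hxs with h | h
    · exact h.symm
    · have h1 : a < x := List.rel_of_pairwise_cons hps h
      have h2 : x ≤ a := hmin a ((hmems a).mp (by rw [hst]; exact List.mem_cons_self))
      exact absurd h1 (not_lt.mpr h2)
  have hrev : Chain' (fun p q => q < p) s.reverse := by
    exact List.isChain_reverse.mpr hcs
  obtain ⟨b, t2, hst2⟩ : ∃ b t2, s.reverse = b :: t2 :=
    List.exists_cons_of_ne_nil (by simp; intro h; rw [h] at hslen; simp at hslen; omega)
  have hby : b = y := by
    have hps2 : Pairwise (fun p q => q < p) s.reverse := List.isChain_iff_pairwise.mp hrev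
    have hys : y ∈ s.reverse := by
      rw [List.mem_reverse]; exact (hmems y).mpr (List.mem_of_mem_drop hy)
    rw [hst2] at hys hps2
    rcases List.mem_cons.mp hys with h | h
    · exact h.symm
    · have h1 : y < b := List.rel_of_pairwise_cons hps2 h
      have h2 : b ≤ y := hmax b ((hmems b).mp (by rw [← List.mem_reverse, hst2]; exact List.mem_cons_self))
      exact absurd h1 (not_lt.mpr h2)
  -- x at index r' of l
  have hxl : l[r']? = some x := by
    have h1 : s[0]? = some x := by rw [hst, hax]; simp
    rw [hs, List.getElem?_rotate (by omega)] at h1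
    rwa [Nat.zero_add, Nat.mod_eq_of_lt hrlt] at h1
  -- y at index (len - 1 + r') % len of l
  have hyl : l[(l.length - 1 + r') % l.length]? = some y := by
    have h1 : s.reverse[0]? = some y := by rw [hst2, hby]; simp
    rw [List.getElem?_reverse (by omega)] at h1
    rw [show s.length - 1 - 0 = l.length - 1 by omega] at h1
    rw [hs, List.getElem?_rotate (by omega)] at h1
    exact h1
  -- index of x within first m
  obtain ⟨j, hj, hjx⟩ := List.mem_iff_getElem.mp hx
  have hjm : j < m := by simp [List.length_take] at hj; omega
  have hjlen : j < l.length := by omega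
  rw [List.getElem_take] at hjx
  have hjx' : l[j]? = some x := by rw [List.getElem?_eq_getElem hjlen, hjx]
  have hjr : j = r' := by
    apply (hnodl.getElem_inj_iff (hi := hjlen) (hj := hrlt)).mp
    have := hjx'.trans hxl.symm
    rw [List.getElem?_eq_getElem hjlen, List.getElem?_eq_getElem hrlt] at this
    exact Option.some_injective _ this
  -- index of y within last m
  obtain ⟨j2, hj2, hj2y⟩ := List.mem_iff_getElem.mp hy
  have hj2len : m + j2 < l.length := by simp [List.length_drop] at hj2; omega
  rw [List.getElem_drop] at hj2y
  have hj2y' : l[m + j2]? = some y := by rw [List.getElem?_eq_getElem hj2len, hj2y]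
  have hj2r : m + j2 = (l.length - 1 + r') % l.length := by
    apply (hnodl.getElem_inj_iff (hi := hj2len) (hj := Nat.mod_lt _ hlpos)).mp
    have := hj2y'.trans hyl.symm
    rw [List.getElem?_eq_getElem hj2len, List.getElem?_eq_getElem (Nat.mod_lt _ hlpos)] at this
    exact Option.some_injective _ this
  have hr0 : r' = 0 := by
    by_contra hne
    have h2 : (l.length - 1 + r') % l.length = r' - 1 := by
      rw [Nat.mod_eq_sub_mod (by omega), Nat.mod_eq_of_lt (by omega)]
      omega
    omega
  rw [hs, hr0, List.rotate_zero] at hcs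
  exact hcs

lemma struct_aux (n : ℕ) (hn : 0 < n)
    (P Q : List (Fin n))
    (x y : Fin n)
    (hminAll : ∀ z : Fin n, x ≤ z) (hmaxAll : ∀ z : Fin n, z ≤ y)
    (pq : List (Fin n) × List (Fin n))
    (hlen12 : pq.1.length = pq.2.length) (hnd1 : pq.1.Nodup) (hnd2 : pq.2.Nodup)
    (hdisj12 : ∀ z ∈ pq.1, z ∉ pq.2)
    (hcc12 : ∃ r, List.Chain' (· < ·) ((pq.1 ++ pq.2.reverse).rotate r))
    (hp1 : pq.1.Perm (x :: P)) (hp2 : pq.2.Perm (y :: Q))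
    (hPQ : P.length = Q.length)
    (hdisjPQ : ∀ z ∈ P, z ∉ Q)
    (hccPQ : ∃ r, List.Chain' (· < ·) ((P ++ Q.reverse).rotate r))
    (hk : 0 < P.length) :
    pq.1 = x :: P ∧ pq.2 = y :: Q ∧ List.Chain' (· < ·) ((x :: P) ++ (y :: Q).reverse) :=
    by
  haveI : IsAntisymm (Fin n) (· < ·) := ⟨fun a b h h' => absurd h' (lt_asymm h)⟩
  haveI : IsAntisymm (Fin n) (· > ·) := ⟨fun a b h h' => absurd h' (lt_asymm h)⟩
  have hlen1 : pq.1.length = P.length + 1 := by rw [hp1.length_eq]; simp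
  have hlen2 : pq.2.length = Q.length + 1 := by rw [hp2.length_eq]; simp
  set L := pq.1 ++ pq.2.reverse with hLdef
  have hLlen : L.length = 2 * (P.length + 1) := by
    simp only [hLdef, List.length_append, List.length_reverse, hlen1, hlen2, hPQ]; omega
  obtain ⟨r, hrot⟩ := hcc12
  have hchainL : Chain' (· < ·) L := by
    apply chain'_of_rotate L (P.length + 1) r hLlen (by omega) hrot x y
    · rw [hLdef, List.take_left' hlen1]
      exact hp1.symm.subset (List.mem_cons_self)
    · rw [hLdef, List.drop_left' hlen1, List.mem_reverse]
      exact hp2.symm.subset (List.mem_cons_self)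
    · exact fun z _ => hminAll z
    · exact fun z _ => hmaxAll z
  have hpairL : Pairwise (· < ·) L := List.isChain_iff_pairwise.mp hchainL
  -- decompose pq.1
  obtain ⟨a1, t, h1eq⟩ : ∃ a t, pq.1 = a :: t :=
    List.exists_cons_of_ne_nil (by intro h; rw [h] at hlen1; simp at hlen1)
  have hL1 : L = a1 :: (t ++ pq.2.reverse) := by rw [hLdef, h1eq]; rfl
  have hpairL' : Pairwise (· < ·) (a1 :: (t ++ pq.2.reverse)) := by rw [← hL1]; exact hpairL
  have ha1 : a1 = x := by
    have hxs : x ∈ a1 :: t := by rw [← h1eq]; exact hp1.symm.subset (List.mem_cons_self)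
    rcases List.mem_cons.mp hxs with h | h
    · exact h.symm
    · have h1 : a1 < x := List.rel_of_pairwise_cons hpairL' (List.mem_append_left _ h)
      exact absurd h1 (not_lt.mpr (hminAll a1))
  have ht_perm : t.Perm P := by
    have := hp1; rw [h1eq, ha1] at this; exact this.cons_inv
  -- decompose pq.2
  have hchain2r : Chain' (· < ·) pq.2.reverse := by
    refine List.isChain_iff_pairwise.mpr (List.Pairwise.sublist ?_ hpairL)
    rw [hLdef]; exact List.sublist_append_right _ _
  have hchain2 : Chain' (· > ·) pq.2 := by
    have := List.isChain_reverse.mp hchain2r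
    exact this
  have hpair2 : Pairwise (· > ·) pq.2 := List.isChain_iff_pairwise.mp hchain2
  obtain ⟨a2, u, h2eq⟩ : ∃ a u, pq.2 = a :: u :=
    List.exists_cons_of_ne_nil (by intro h; rw [h] at hlen2; simp at hlen2)
  have hpair2' : Pairwise (· > ·) (a2 :: u) := by rw [← h2eq]; exact hpair2
  have ha2 : a2 = y := by
    have hys : y ∈ a2 :: u := by rw [← h2eq]; exact hp2.symm.subset (List.mem_cons_self)
    rcases List.mem_cons.mp hys with h | h
    · exact h.symm
    · have h1 : a2 > y := List.rel_of_pairwise_cons hpair2' h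
      exact absurd h1 (not_lt.mpr (hmaxAll a2))
  have hu_perm : u.Perm Q := by
    have := hp2; rw [h2eq, ha2] at this; exact this.cons_inv
  -- decompose t and u
  obtain ⟨x0, t', ht'⟩ : ∃ a t', t = a :: t' := by
    apply List.exists_cons_of_ne_nil
    intro h
    rw [h] at ht_perm
    have h2 := ht_perm.length_eq
    simp at h2
    omega
  obtain ⟨y0, u', hu'⟩ : ∃ a u', u = a :: u' := by
    apply List.exists_cons_of_ne_nil
    intro h
    rw [h] at hu_perm
    have h2 := hu_perm.length_eq
    simp at h2
    omega
  set M := P ++ Q.reverse with hMdef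
  have hMlen : M.length = 2 * P.length := by
    simp only [hMdef, List.length_append, List.length_reverse, hPQ]; omega
  have hpairtail : Pairwise (· < ·) (t ++ pq.2.reverse) := hpairL'.of_cons
  have hpairt : Pairwise (· < ·) t :=
    List.Pairwise.sublist (List.sublist_append_left _ _) hpairtail
  have hcross : ∀ p ∈ t, ∀ q ∈ pq.2.reverse, p < q :=
    (List.pairwise_append.mp hpairtail).2.2
  have hpairu : Pairwise (· > ·) u := hpair2'.of_cons
  have hy0u : y0 ∈ u := by rw [hu']; exact List.mem_cons_self
  have hminM : ∀ z ∈ M, x0 ≤ z := by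
    intro z hz
    have hz' : z ∈ t ∨ z ∈ pq.2.reverse := by
      rcases List.mem_append.mp hz with h | h
      · exact Or.inl (ht_perm.mem_iff.mpr h)
      · refine Or.inr ?_
        rw [List.mem_reverse] at h ⊢
        rw [h2eq]; exact List.mem_cons_of_mem _ (hu_perm.mem_iff.mpr h)
    rcases hz' with h | h
    · rw [ht'] at h
      rcases List.mem_cons.mp h with h | h
      · exact le_of_eq h.symm
      · have : x0 < z := by
          have hpt : Pairwise (· < ·) (x0 :: t') := by rw [← ht']; exact hpairt
          exact List.rel_of_pairwise_cons hpt h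
        exact this.le
    · have : x0 < z := hcross x0 (by rw [ht']; exact List.mem_cons_self) z h
      exact this.le
  have hmaxM : ∀ z ∈ M, z ≤ y0 := by
    intro z hz
    rcases List.mem_append.mp hz with h | h
    · have hzt : z ∈ t := ht_perm.mem_iff.mpr h
      have : z < y0 := hcross z hzt y0 (by
        rw [List.mem_reverse, h2eq]; exact List.mem_cons_of_mem _ hy0u)
      exact this.le
    · rw [List.mem_reverse] at h
      have hzu : z ∈ u := hu_perm.mem_iff.mpr h
      rw [hu'] at hzu
      rcases List.mem_cons.mp hzu with h' | h'
      · exact le_of_eq h'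
      · have hpu : Pairwise (· > ·) (y0 :: u') := by rw [← hu']; exact hpairu
        exact (List.rel_of_pairwise_cons hpu h').le
  obtain ⟨r2, hrot2⟩ := hccPQ
  have hchainM : Chain' (· < ·) M := by
    apply chain'_of_rotate M P.length r2 hMlen hk hrot2 x0 y0
    · rw [hMdef, List.take_left' rfl]
      exact ht_perm.mem_iff.mp (by rw [ht']; exact List.mem_cons_self)
    · rw [hMdef, List.drop_left' rfl, List.mem_reverse]
      exact hu_perm.mem_iff.mp hy0u
    · exact hminM
    · exact hmaxM
  have hpairM : Pairwise (· < ·) M := List.isChain_iff_pairwise.mp hchainM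
  have hpairP : Pairwise (· < ·) P :=
    List.Pairwise.sublist (List.sublist_append_left _ _) hpairM
  have hpairQrev : Pairwise (· < ·) Q.reverse :=
    List.Pairwise.sublist (List.sublist_append_right _ _) hpairM
  have hpairQ : Pairwise (· > ·) Q := by
    have := List.pairwise_reverse.mpr hpairQrev
    simpa using this
  have htP : t = P := List.Perm.eq_of_pairwise (fun _ _ _ _ h h' => absurd h' (lt_asymm h)) hpairt hpairP ht_perm
  have huQ : u = Q := List.Perm.eq_of_pairwise (fun _ _ _ _ h h' => absurd h' (lt_asymm h)) hpairu hpairQ hu_perm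
  have hpq1 : pq.1 = x :: P := by rw [h1eq, ha1, htP]
  have hpq2 : pq.2 = y :: Q := by rw [h2eq, ha2, huQ]
  refine ⟨hpq1, hpq2, ?_⟩
  have : L = (x :: P) ++ (y :: Q).reverse := by rw [hLdef, hpq1, hpq2]
  rw [← this]; exact hchainL

end

theorem statement_12 (n : ℕ) (hn : 0 < n) (S : Set (CircPair n))
    (hS : ElectricalPositroid n S) (P Q : List (Fin n))
    (hcp : IsCircularPair ((P, Q) : PrePair n))
    (h1P : firstV n hn ∉ P) (h1Q : firstV n hn ∉ Q)
    (hnP : lastV n hn ∉ P) (hnQ : lastV n hn ∉ Q)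
    (hinsCP : ∃ pq : PrePair n, InsPair P Q (firstV n hn) (lastV n hn) pq)
    (hmem : cp ((P, Q) : PrePair n) ∈ S)
    (hins : ∃ pq : PrePair n,
      InsPair P Q (firstV n hn) (lastV n hn) pq ∧ cp pq ∈ S) :
    ∀ i : ℕ, i < P.length →
      cp ((P.eraseIdx i, Q.eraseIdx i) : PrePair n) ∈ S ∧
      ∃ pq : PrePair n,
        InsPair (P.eraseIdx i) (Q.eraseIdx i) (firstV n hn) (lastV n hn) pq ∧
        cp pq ∈ S := by
  intro i hi
  obtain ⟨pq, ⟨hpqCP, hp1, hp2⟩, hpqS⟩ := hins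
  obtain ⟨hlen12, hnd1, hnd2, hdisj12, hcc12⟩ := id hpqCP
  have hPQ : P.length = Q.length := hcp.1
  have hminAll : ∀ z : Fin n, firstV n hn ≤ z := fun z => by
    simp [firstV, Fin.le_def]
  have hmaxAll : ∀ z : Fin n, z ≤ lastV n hn := fun z => by
    simp only [lastV, Fin.le_def]
    omega
  obtain ⟨hpq1, hpq2, hchain⟩ :=
    struct_aux n hn P Q (firstV n hn) (lastV n hn) hminAll hmaxAll pq
      hlen12 hnd1 hnd2 hdisj12 hcc12 hp1 hp2 hPQ hcp.2.2.2.1 hcp.2.2.2.2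
      (by omega)
  obtain ⟨_, _, _, hax3, _⟩ := hS
  have part1 := hax3 P Q hcp hmem i hi
  have hnew := hax3 pq.1 pq.2 hpqCP hpqS (i + 1)
    (by rw [hpq1]; simp only [List.length_cons]; omega)
  rw [hpq1, hpq2, List.eraseIdx_cons_succ, List.eraseIdx_cons_succ] at hnew
  refine ⟨part1, (firstV n hn :: P.eraseIdx i, lastV n hn :: Q.eraseIdx i),
    ⟨⟨?_, ?_, ?_, ?_, ?_⟩, List.Perm.refl _, List.Perm.refl _⟩, hnew⟩
  · simp only [List.length_cons, List.length_eraseIdx]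
    rw [if_pos hi, if_pos (by omega : i < Q.length)]
    omega
  · exact List.Nodup.sublist (List.Sublist.cons₂ _ (List.eraseIdx_sublist P i)) (hpq1 ▸ hnd1)
  · exact List.Nodup.sublist (List.Sublist.cons₂ _ (List.eraseIdx_sublist Q i)) (hpq2 ▸ hnd2)
  · intro z hz hz'
    have hz1 : z ∈ pq.1 := by
      rw [hpq1]; exact (List.Sublist.cons₂ _ (List.eraseIdx_sublist P i)).subset hz
    have hz2 : z ∈ pq.2 := by
      rw [hpq2]; exact (List.Sublist.cons₂ _ (List.eraseIdx_sublist Q i)).subset hz'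
    exact hdisj12 z hz1 hz2
  · refine ⟨0, ?_⟩
    rw [List.rotate_zero]
    refine List.isChain_iff_pairwise.mpr
      (List.Pairwise.sublist ?_ (List.isChain_iff_pairwise.mp hchain))
    exact List.Sublist.append (List.Sublist.cons₂ _ (List.eraseIdx_sublist P i))
      ((List.Sublist.cons₂ _ (List.eraseIdx_sublist Q i)).reverse)

end CircularPlanar
end

section
/- Let S be an electrical positroid on n boundary vertices and let (1,P,a,b,c,Q; n,R,d,e,f,T) be a circular pair, where P,Q,R,T are (possibly empty) tuples of boundary vertices and a,b,c,d,e,f are single boundary vertices. Suppose that the size-one pairs (a;d),(a;e),(b;d),(b;e),(b;f),(c;e),(c;f) all lie in S, that (1,P,a,b,Q; n,R,d,e,T) ∈ S, and that (P,a,c,Q; R,d,f,T) ∈ S. Then (1,P,a,c,Q; n,R,d,f,T) ∈ S. -/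
namespace CircularPlanar

-- auxiliary lemmas
section aux
variable {α : Type*} [DecidableEq α]

lemma erase_mid (l₁ l₂ : List α) (x : α) (h : x ∉ l₁) :
    (l₁ ++ x :: l₂).erase x = l₁ ++ l₂ := by
  rw [List.erase_append_right _ h, List.erase_cons_head]

omit [DecidableEq α] in
lemma notmem_left_of_nodup (l₁ l₂ : List α) (x : α) (h : (l₁ ++ x :: l₂).Nodup) : x ∉ l₁ := by
  have hd := List.disjoint_of_nodup_append h
  exact fun hx => hd hx (List.mem_cons_self (a := x) (l := l₂))

lemma reverse_erase (l : List α) (x : α) (h : l.Nodup) :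
    l.reverse.erase x = (l.erase x).reverse := by
  rw [(List.nodup_reverse.mpr h).erase_eq_filter, h.erase_eq_filter, List.filter_reverse]

end aux

section cw
open List
variable {n : ℕ}

lemma cw_sublist {l l' : List (Fin n)} (h : l' <+ l) (hcw : ClockwiseCyclic l) :
    ClockwiseCyclic l' := by
  obtain ⟨k, hk⟩ := hcw
  rcases Nat.eq_zero_or_pos l.length with h0 | hpos
  · have hl : l = [] := List.length_eq_zero_iff.mp h0
    subst hl
    have hl' : l' = [] := List.sublist_nil.mp h
    subst hl'
    exact ⟨0, List.isChain_nil⟩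
  · rw [← List.rotate_mod] at hk
    have hle : k % l.length ≤ l.length := (Nat.mod_lt _ hpos).le
    rw [List.rotate_eq_drop_append_take hle] at hk
    have hpw := List.isChain_iff_pairwise.mp hk
    have h' : l' <+ l.take (k % l.length) ++ l.drop (k % l.length) := by
      rw [List.take_append_drop]; exact h
    obtain ⟨u, v, rfl, hu, hv⟩ := List.sublist_append_iff.mp h'
    refine ⟨u.length, ?_⟩
    have hrot : (u ++ v).rotate u.length = v ++ u := by
      rw [List.rotate_eq_drop_append_take (by simp), List.drop_left, List.take_left]
    rw [hrot]
    exact List.isChain_iff_pairwise.mpr (List.Pairwise.sublist (hv.append hu) hpw)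

lemma cw_append_comm {u v : List (Fin n)} (h : ClockwiseCyclic (u ++ v)) :
    ClockwiseCyclic (v ++ u) := by
  obtain ⟨k, hk⟩ := h
  have h1 : (v ++ u).rotate v.length = u ++ v := by
    rw [List.rotate_eq_drop_append_take (by simp), List.drop_left, List.take_left]
  exact ⟨v.length + k, by rw [← List.rotate_rotate, h1]; exact hk⟩

lemma cp_rev (l₁ l₂ : List (Fin n)) : cp (l₁.reverse, l₂.reverse) = cp (l₂, l₁) :=
  Quotient.sound (Or.inr rfl)

end cw

theorem statement_14 (n : ℕ) (hn : 0 < n) (S : Set (CircPair n))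
    (hS : ElectricalPositroid n S) (P Q R T : List (Fin n)) (a b c d e f : Fin n)
    (hcp : IsCircularPair
      ((firstV n hn :: (P ++ [a, b, c] ++ Q),
        lastV n hn :: (R ++ [d, e, f] ++ T)) : PrePair n))
    (had : cp (([a], [d]) : PrePair n) ∈ S)
    (hae : cp (([a], [e]) : PrePair n) ∈ S)
    (hbd : cp (([b], [d]) : PrePair n) ∈ S)
    (hbe : cp (([b], [e]) : PrePair n) ∈ S)
    (hbf : cp (([b], [f]) : PrePair n) ∈ S)
    (hce : cp (([c], [e]) : PrePair n) ∈ S)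
    (hcf : cp (([c], [f]) : PrePair n) ∈ S)
    (h8 : cp ((firstV n hn :: (P ++ [a, b] ++ Q),
        lastV n hn :: (R ++ [d, e] ++ T)) : PrePair n) ∈ S)
    (h9 : cp ((P ++ [a, c] ++ Q, R ++ [d, f] ++ T) : PrePair n) ∈ S) :
    cp ((firstV n hn :: (P ++ [a, c] ++ Q),
        lastV n hn :: (R ++ [d, f] ++ T)) : PrePair n) ∈ S := by
  obtain ⟨-, hax1, hax2, hax3, -⟩ := hS
  set o := firstV n hn with ho
  set z := lastV n hn with hz
  obtain ⟨hlen, hXnd, hYnd, hdisj, hcw⟩ := hcp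
  simp only at hlen hXnd hYnd hdisj hcw
  -- basic arithmetic
  have hm : P.length + Q.length = R.length + T.length := by
    simp at hlen; omega
  -- not-mem facts
  have nb1 : b ∉ o :: (P ++ [a]) := by
    refine notmem_left_of_nodup _ (c :: Q) b ?_
    rw [show (o :: (P ++ [a])) ++ b :: c :: Q = o :: (P ++ [a, b, c] ++ Q) by simp]
    exact hXnd
  have nc1 : c ∉ o :: (P ++ [a, b]) := by
    refine notmem_left_of_nodup _ Q c ?_
    rw [show (o :: (P ++ [a, b])) ++ c :: Q = o :: (P ++ [a, b, c] ++ Q) by simp]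
    exact hXnd
  have nbA : b ∉ P ++ [a] := fun h => nb1 (List.mem_cons_of_mem _ h)
  have ncA : c ∉ P ++ [a, b] := fun h => nc1 (List.mem_cons_of_mem _ h)
  have ncA1 : c ∉ P ++ [a] := by
    intro h
    rcases List.mem_append.mp h with h | h
    · exact ncA (List.mem_append_left _ h)
    · simp at h; subst h; exact ncA (by simp)
  have ne1 : e ∉ z :: (R ++ [d]) := by
    refine notmem_left_of_nodup _ (f :: T) e ?_
    rw [show (z :: (R ++ [d])) ++ e :: f :: T = z :: (R ++ [d, e, f] ++ T) by simp]
    exact hYnd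
  have nf1 : f ∉ z :: (R ++ [d, e]) := by
    refine notmem_left_of_nodup _ T f ?_
    rw [show (z :: (R ++ [d, e])) ++ f :: T = z :: (R ++ [d, e, f] ++ T) by simp]
    exact hYnd
  have neB : e ∉ R ++ [d] := fun h => ne1 (List.mem_cons_of_mem _ h)
  have nfB : f ∉ R ++ [d, e] := fun h => nf1 (List.mem_cons_of_mem _ h)
  have nfB1 : f ∉ R ++ [d] := by
    intro h
    rcases List.mem_append.mp h with h | h
    · exact nfB (List.mem_append_left _ h)
    · simp at h; subst h; exact nfB (by simp)
  -- erase computations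
  have eXo : (o :: (P ++ [a, b, c] ++ Q)).erase o = P ++ [a, b, c] ++ Q :=
    List.erase_cons_head ..
  have eXc : (o :: (P ++ [a, b, c] ++ Q)).erase c = o :: (P ++ [a, b] ++ Q) := by
    have h := erase_mid (o :: (P ++ [a, b])) Q c nc1
    simpa using h
  have eXb : (o :: (P ++ [a, b, c] ++ Q)).erase b = o :: (P ++ [a, c] ++ Q) := by
    have h := erase_mid (o :: (P ++ [a])) (c :: Q) b nb1
    simpa using h
  have eAb : (P ++ [a, b, c] ++ Q).erase b = P ++ [a, c] ++ Q := by
    have h := erase_mid (P ++ [a]) (c :: Q) b nbA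
    simpa using h
  have eAc : (P ++ [a, b, c] ++ Q).erase c = P ++ [a, b] ++ Q := by
    have h := erase_mid (P ++ [a, b]) Q c ncA
    simpa using h
  have eAbc : (P ++ [a, c] ++ Q).erase c = P ++ [a] ++ Q := by
    have h := erase_mid (P ++ [a]) Q c ncA1
    simpa using h
  have eAcb : (P ++ [a, b] ++ Q).erase b = P ++ [a] ++ Q := by
    have h := erase_mid (P ++ [a]) Q b nbA
    simpa using h
  have eXco : (o :: (P ++ [a, b] ++ Q)).erase o = P ++ [a, b] ++ Q :=
    List.erase_cons_head ..
  have eYz : (z :: (R ++ [d, e, f] ++ T)).erase z = R ++ [d, e, f] ++ T :=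
    List.erase_cons_head ..
  have eYf : (z :: (R ++ [d, e, f] ++ T)).erase f = z :: (R ++ [d, e] ++ T) := by
    have h := erase_mid (z :: (R ++ [d, e])) T f nf1
    simpa using h
  have eYe : (z :: (R ++ [d, e, f] ++ T)).erase e = z :: (R ++ [d, f] ++ T) := by
    have h := erase_mid (z :: (R ++ [d])) (f :: T) e ne1
    simpa using h
  have eBe : (R ++ [d, e, f] ++ T).erase e = R ++ [d, f] ++ T := by
    have h := erase_mid (R ++ [d]) (f :: T) e neB
    simpa using h
  have eBf : (R ++ [d, e, f] ++ T).erase f = R ++ [d, e] ++ T := by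
    have h := erase_mid (R ++ [d, e]) T f nfB
    simpa using h
  have eBef : (R ++ [d, f] ++ T).erase f = R ++ [d] ++ T := by
    have h := erase_mid (R ++ [d]) T f nfB1
    simpa using h
  have eYez : (z :: (R ++ [d, f] ++ T)).erase z = R ++ [d, f] ++ T :=
    List.erase_cons_head ..
  -- sublist facts
  have sAX : List.Sublist (P ++ [a, b, c] ++ Q) (o :: (P ++ [a, b, c] ++ Q)) :=
    List.sublist_cons_self ..
  have sXcX : List.Sublist (o :: (P ++ [a, b] ++ Q)) (o :: (P ++ [a, b, c] ++ Q)) := by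
    simp only [List.append_assoc]
    refine List.Sublist.cons₂ o ?_
    refine List.Sublist.append_left ?_ P
    exact (List.Sublist.cons₂ a (List.Sublist.cons₂ b (List.sublist_cons_self c Q)))
  have sBY : List.Sublist (R ++ [d, e, f] ++ T) (z :: (R ++ [d, e, f] ++ T)) :=
    List.sublist_cons_self ..
  have sYfY : List.Sublist (z :: (R ++ [d, e] ++ T)) (z :: (R ++ [d, e, f] ++ T)) := by
    simp only [List.append_assoc]
    refine List.Sublist.cons₂ z ?_
    refine List.Sublist.append_left ?_ R
    exact (List.Sublist.cons₂ d (List.Sublist.cons₂ e (List.sublist_cons_self f T)))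
  have sYeY : List.Sublist (z :: (R ++ [d, f] ++ T)) (z :: (R ++ [d, e, f] ++ T)) := by
    simp only [List.append_assoc]
    refine List.Sublist.cons₂ z ?_
    refine List.Sublist.append_left ?_ R
    exact (List.Sublist.cons₂ d (List.Sublist.cons e (List.Sublist.cons₂ f (List.Sublist.refl T))))
  -- nodups of sublists
  have hXcnd : (o :: (P ++ [a, b] ++ Q)).Nodup := hXnd.sublist sXcX
  have hYend : (z :: (R ++ [d, f] ++ T)).Nodup := hYnd.sublist sYeY
  -- circular pair structures
  have hAB : IsCircularPair ((P ++ [a, b, c] ++ Q, R ++ [d, e, f] ++ T) : PrePair n) := by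
    refine ⟨by simp; omega, hXnd.sublist sAX, hYnd.sublist sBY,
      fun x hx hy => hdisj x (sAX.subset hx) (sBY.subset hy), ?_⟩
    exact cw_sublist (sAX.append sBY.reverse) hcw
  have hXcYf : IsCircularPair
      ((o :: (P ++ [a, b] ++ Q), z :: (R ++ [d, e] ++ T)) : PrePair n) := by
    refine ⟨by simp; omega, hXcnd, hYnd.sublist sYfY,
      fun x hx hy => hdisj x (sXcX.subset hx) (sYfY.subset hy), ?_⟩
    exact cw_sublist (sXcX.append sYfY.reverse) hcw
  have hXcB : IsCircularPair
      ((o :: (P ++ [a, b] ++ Q), R ++ [d, e, f] ++ T) : PrePair n) := by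
    refine ⟨by simp; omega, hXcnd, hYnd.sublist sBY,
      fun x hx hy => hdisj x (sXcX.subset hx) (sBY.subset hy), ?_⟩
    exact cw_sublist (sXcX.append sBY.reverse) hcw
  have hXY : IsCircularPair
      ((o :: (P ++ [a, b, c] ++ Q), z :: (R ++ [d, e, f] ++ T)) : PrePair n) :=
    ⟨hlen, hXnd, hYnd, hdisj, hcw⟩
  -- step 1 : S10
  have hS10 : cp ((P ++ [a, b] ++ Q, R ++ [d, e] ++ T) : PrePair n) ∈ S := by
    have h := hax3 _ _ hXcYf h8 0 (by simp)
    simpa using h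
  -- the key continuation: from S12 derive the goal
  have key : cp ((P ++ [a, b] ++ Q, R ++ [d, f] ++ T) : PrePair n) ∈ S →
      cp ((o :: (P ++ [a, c] ++ Q), z :: (R ++ [d, f] ++ T)) : PrePair n) ∈ S := by
    intro hS12
    -- step 4 : S13 via (2b) on the flipped pair
    have hlen4 : (z :: (R ++ [d, e, f] ++ T)).reverse.length =
        (o :: (P ++ [a, b] ++ Q)).reverse.length + 1 := by simp; omega
    have hcw4 : ClockwiseCyclic ((z :: (R ++ [d, e, f] ++ T)).reverse ++
        ((o :: (P ++ [a, b] ++ Q)).reverse).reverse) := by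
      rw [List.reverse_reverse]
      exact cw_sublist ((List.Sublist.refl _).append sXcX) (cw_append_comm hcw)
    have hsub4 : List.Sublist ([f, e, z]) ((z :: (R ++ [d, e, f] ++ T)).reverse) := by
      rw [show (z :: (R ++ [d, e, f] ++ T)).reverse =
          T.reverse ++ ([f, e, d] ++ (R.reverse ++ [z])) by simp]
      refine List.sublist_append_of_sublist_right ?_
      refine List.Sublist.cons₂ f (List.Sublist.cons₂ e ?_)
      exact List.Sublist.cons d (List.sublist_append_right R.reverse [z])
    have hmem4 : o ∈ (o :: (P ++ [a, b] ++ Q)).reverse := by simp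
    have prem1 : cp (((z :: (R ++ [d, e, f] ++ T)).reverse).erase f,
        (o :: (P ++ [a, b] ++ Q)).reverse) ∈ S := by
      rw [reverse_erase _ f hYnd, eYf, cp_rev]
      exact h8
    have prem2 : cp ((((z :: (R ++ [d, e, f] ++ T)).reverse).erase e).erase z,
        ((o :: (P ++ [a, b] ++ Q)).reverse).erase o) ∈ S := by
      rw [reverse_erase _ e hYnd, eYe, reverse_erase _ z hYend, eYez,
        reverse_erase _ o hXcnd, eXco, cp_rev]
      exact hS12
    have h4 := (hax2 _ _ f e z o hlen4 hcw4 hsub4 hmem4).2.1 ⟨prem1, prem2⟩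
    have hS13 : cp ((o :: (P ++ [a, b] ++ Q), z :: (R ++ [d, f] ++ T)) : PrePair n) ∈ S := by
      have h := h4.1
      rwa [reverse_erase _ e hYnd, eYe, cp_rev] at h
    -- step 5 : goal via (2c)
    have hlen5 : (o :: (P ++ [a, b, c] ++ Q)).length =
        (z :: (R ++ [d, f] ++ T)).length + 1 := by simp; omega
    have hcw5 : ClockwiseCyclic ((o :: (P ++ [a, b, c] ++ Q)) ++
        (z :: (R ++ [d, f] ++ T)).reverse) :=
      cw_sublist ((List.Sublist.refl _).append sYeY.reverse) hcw
    have hsub5 : List.Sublist ([o, b, c]) (o :: (P ++ [a, b, c] ++ Q)) := by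
      refine List.Sublist.cons₂ o ?_
      simp only [List.append_assoc]
      refine List.sublist_append_of_sublist_right ?_
      exact List.Sublist.cons a (List.Sublist.cons₂ b (List.Sublist.cons₂ c (List.nil_sublist Q)))
    have hmem5 : z ∈ z :: (R ++ [d, f] ++ T) := List.mem_cons_self ..
    have prem51 : cp ((o :: (P ++ [a, b, c] ++ Q)).erase c, z :: (R ++ [d, f] ++ T)) ∈ S := by
      rw [eXc]; exact hS13
    have prem52 : cp (((o :: (P ++ [a, b, c] ++ Q)).erase o).erase b,
        (z :: (R ++ [d, f] ++ T)).erase z) ∈ S := by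
      rw [eXo, eAb, eYez]; exact h9
    have h5 := (hax2 _ _ o b c z hlen5 hcw5 hsub5 hmem5).2.2 ⟨prem51, prem52⟩
    have h := h5.1
    rwa [eXb] at h
  -- step 2 : case analysis via (1a) on (A, B)
  have s_bc : List.Sublist ([b, c]) (P ++ [a, b, c] ++ Q) := by
    simp only [List.append_assoc]
    refine List.sublist_append_of_sublist_right ?_
    exact List.Sublist.cons a (List.Sublist.cons₂ b (List.Sublist.cons₂ c (List.nil_sublist Q)))
  have s_ef : List.Sublist ([e, f]) (R ++ [d, e, f] ++ T) := by
    simp only [List.append_assoc]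
    refine List.sublist_append_of_sublist_right ?_
    exact List.Sublist.cons d (List.Sublist.cons₂ e (List.Sublist.cons₂ f (List.nil_sublist T)))
  have p9 : cp ((P ++ [a, b, c] ++ Q).erase b, (R ++ [d, e, f] ++ T).erase e) ∈ S := by
    rw [eAb, eBe]; exact h9
  have p10 : cp ((P ++ [a, b, c] ++ Q).erase c, (R ++ [d, e, f] ++ T).erase f) ∈ S := by
    rw [eAc, eBf]; exact hS10
  rcases (hax1 _ _ b c e f hAB s_bc s_ef).1 ⟨p9, p10⟩ with ⟨-, h2⟩ | ⟨hV, hW⟩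
  · exact key (by rwa [eAc, eBe] at h2)
  · -- Case II
    have hW' : cp ((o :: (P ++ [a, b, c] ++ Q)).erase o,
        (z :: (R ++ [d, e, f] ++ T)).erase z) ∈ S := by
      rw [eXo, eYz]; exact hW
    have h8' : cp ((o :: (P ++ [a, b, c] ++ Q)).erase c,
        (z :: (R ++ [d, e, f] ++ T)).erase f) ∈ S := by
      rw [eXc, eYf]; exact h8
    have s_oc : List.Sublist ([o, c]) (o :: (P ++ [a, b, c] ++ Q)) := by
      refine List.Sublist.cons₂ o ?_
      simp only [List.append_assoc]
      refine List.sublist_append_of_sublist_right ?_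
      exact List.Sublist.cons a (List.Sublist.cons b (List.Sublist.cons₂ c (List.nil_sublist Q)))
    have s_zf : List.Sublist ([z, f]) (z :: (R ++ [d, e, f] ++ T)) := by
      refine List.Sublist.cons₂ z ?_
      simp only [List.append_assoc]
      refine List.sublist_append_of_sublist_right ?_
      exact List.Sublist.cons d (List.Sublist.cons e (List.Sublist.cons₂ f (List.nil_sublist T)))
    rcases (hax1 _ _ o c z f hXY s_oc s_zf).1 ⟨hW', h8'⟩ with ⟨-, hU2⟩ | ⟨-, hfull⟩
    · -- Case II.1
      have hU2' : cp ((o :: (P ++ [a, b] ++ Q), R ++ [d, e, f] ++ T) : PrePair n) ∈ S := by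
        rwa [eXc, eYz] at hU2
      have hV' : cp (((o :: (P ++ [a, b] ++ Q)).erase o).erase b,
          ((R ++ [d, e, f] ++ T).erase e).erase f) ∈ S := by
        rw [eXco, eAcb, eBe, eBef]
        rwa [eAb, eAbc, eBe, eBef] at hV
      have s_ob : List.Sublist ([o, b]) (o :: (P ++ [a, b] ++ Q)) := by
        refine List.Sublist.cons₂ o ?_
        simp only [List.append_assoc]
        refine List.sublist_append_of_sublist_right ?_
        exact List.Sublist.cons a (List.Sublist.cons₂ b (List.nil_sublist Q))
      have h := (hax1 _ _ o b e f hXcB s_ob s_ef).2.2 ⟨hV', hU2'⟩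
      refine key ?_
      have h1 := h.1
      rwa [eXco, eBe] at h1
    · -- Case II.2
      have p9' : cp (((o :: (P ++ [a, b, c] ++ Q)).erase o).erase b,
          ((z :: (R ++ [d, e, f] ++ T)).erase z).erase e) ∈ S := by
        rw [eXo, eAb, eYz, eBe]; exact h9
      have s_ob : List.Sublist ([o, b]) (o :: (P ++ [a, b, c] ++ Q)) := by
        refine List.Sublist.cons₂ o ?_
        simp only [List.append_assoc]
        refine List.sublist_append_of_sublist_right ?_
        exact List.Sublist.cons a (List.Sublist.cons₂ b (List.Sublist.cons c (List.nil_sublist Q)))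
      have s_ze : List.Sublist ([z, e]) (z :: (R ++ [d, e, f] ++ T)) := by
        refine List.Sublist.cons₂ z ?_
        simp only [List.append_assoc]
        refine List.sublist_append_of_sublist_right ?_
        exact List.Sublist.cons d (List.Sublist.cons₂ e (List.Sublist.cons f (List.nil_sublist T)))
      have h := (hax1 _ _ o b z e hXY s_ob s_ze).2.2 ⟨p9', hfull⟩
      have h2 := h.2
      rwa [eXb, eYe] at h2

end CircularPlanar
end

section
/- Let S be an electrical positroid on n boundary vertices and let (P;Q)=(a_1,…,a_k;b_1,…,b_k) ∈ S be a circular pair with 1,n ∉ P∪Q such that (P+1;Q+n) is a circular pair. Suppose (P;Q) is incomplete (that is, (P+1;Q+n) ∉ S) and minimal, meaning that (P−a_k;Q−b_k) is complete (that is, ((P−a_k)+1;(Q−b_k)+n) ∈ S). Then, setting a_0 = 1 and b_0 = n, for all 0 ≤ i ≤ k−1 the size-one pairs (a_i;b_{i+1}) and (a_{i+1};b_i) lie in S. -/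
namespace CircularPlanar

variable {n : ℕ}

instance : IsAntisymm (Fin n) (· < ·) := ⟨fun a b h h' => absurd (h.trans h') (lt_irrefl a)⟩
instance : IsAntisymm (Fin n) (· > ·) := ⟨fun a b h h' => absurd (h'.trans h) (lt_irrefl a)⟩
instance : IsTrans (Fin n) (· > ·) := ⟨fun _ _ _ h h' => h'.trans h⟩
instance : @Trans (Fin n) (Fin n) (Fin n) (· > ·) (· > ·) (· > ·) := ⟨fun h h' => h'.trans h⟩

lemma chain'_sublist {r : Fin n → Fin n → Prop} [IsTrans (Fin n) r] {l₁ l₂ : List (Fin n)}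
    (h : l₁.Sublist l₂) (h₂ : List.Chain' r l₂) : List.Chain' r l₁ :=
  haveI : Trans r r r := ⟨fun h h' => IsTrans.trans _ _ _ h h'⟩
  List.isChain_iff_pairwise.mpr ((List.isChain_iff_pairwise.mp h₂).sublist h)

lemma sorted_perm_eq {l₁ l₂ : List (Fin n)} (hp : l₁.Perm l₂)
    (h1 : List.Chain' (· < ·) l₁) (h2 : List.Chain' (· < ·) l₂) : l₁ = l₂ :=
  List.Perm.eq_of_pairwise (fun _ _ _ _ h h' => absurd (h.trans h') (lt_irrefl _)) (List.isChain_iff_pairwise.mp h1) (List.isChain_iff_pairwise.mp h2) hp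

lemma sorted_perm_eq' {l₁ l₂ : List (Fin n)} (hp : l₁.Perm l₂)
    (h1 : List.Chain' (· > ·) l₁) (h2 : List.Chain' (· > ·) l₂) : l₁ = l₂ :=
  List.Perm.eq_of_pairwise (le := (· > ·)) (fun _ _ _ _ h h' => absurd (h.trans h') (lt_irrefl _)) (List.isChain_iff_pairwise.mp h1) (List.isChain_iff_pairwise.mp h2) hp

lemma exists_min : ∀ (l : List (Fin n)), l ≠ [] → ∃ a ∈ l, ∀ x ∈ l, a ≤ x := by
  intro l
  induction l with
  | nil => simp
  | cons x t ih =>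
    intro _
    rcases eq_or_ne t [] with rfl | ht
    · exact ⟨x, by simp⟩
    · obtain ⟨a, ha, hmin⟩ := ih ht
      rcases le_total x a with h | h
      · exact ⟨x, by simp, by intro y hy; rcases List.mem_cons.mp hy with rfl | hy
                              · rfl
                              · exact h.trans (hmin y hy)⟩
      · exact ⟨a, List.mem_cons_of_mem _ ha, by intro y hy; rcases List.mem_cons.mp hy with rfl | hy
                                                · exact h
                                                · exact hmin y hy⟩

lemma exists_max : ∀ (l : List (Fin n)), l ≠ [] → ∃ a ∈ l, ∀ x ∈ l, x ≤ a := by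
  intro l
  induction l with
  | nil => simp
  | cons x t ih =>
    intro _
    rcases eq_or_ne t [] with rfl | ht
    · exact ⟨x, by simp⟩
    · obtain ⟨a, ha, hmax⟩ := ih ht
      rcases le_total x a with h | h
      · exact ⟨a, List.mem_cons_of_mem _ ha, by intro y hy; rcases List.mem_cons.mp hy with rfl | hy
                                                · exact h
                                                · exact hmax y hy⟩
      · exact ⟨x, by simp, by intro y hy; rcases List.mem_cons.mp hy with rfl | hy
                              · rfl
                              · exact (hmax y hy).trans h⟩

lemma rot_sorted {A B : List (Fin n)} {a b : Fin n}
    (ha : a ∈ A) (hamin : ∀ x ∈ A ++ B, a ≤ x)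
    (hb : b ∈ B) (hbmax : ∀ x ∈ A ++ B, x ≤ b)
    (hrot : ClockwiseCyclic (A ++ B)) : List.Chain' (· < ·) (A ++ B) := by
  obtain ⟨r, hr⟩ := hrot
  set M := A ++ B with hM
  have hlen : 0 < M.length :=
    List.length_pos_iff.mpr (List.ne_nil_of_mem (List.mem_append_left _ ha))
  rw [← List.rotate_mod] at hr
  set r' := r % M.length with hr'def
  have hrlt : r' < M.length := Nat.mod_lt _ hlen
  rcases Nat.eq_zero_or_pos r' with h0 | hpos
  · rwa [h0, List.rotate_zero] at hr
  exfalso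
  rw [List.rotate_eq_drop_append_take hrlt.le] at hr
  have hpw := List.isChain_iff_pairwise.mp hr
  have hDT : ∀ x ∈ M.drop r', ∀ y ∈ M.take r', x < y :=
    (List.pairwise_append.mp hpw).2.2
  have hndrot : (M.drop r' ++ M.take r').Nodup := hpw.imp ne_of_lt
  have hndM : M.Nodup := by
    have : (M.drop r' ++ M.take r').Perm M := by
      calc (M.drop r' ++ M.take r').Perm (M.take r' ++ M.drop r') := List.perm_append_comm
      _ = M := List.take_append_drop _ _
    exact this.nodup hndrot
  have hdisj : A.Disjoint B := List.disjoint_of_nodup_append hndM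
  -- drop r' nonempty, take r' nonempty
  have hdne : M.drop r' ≠ [] := by
    intro h; have : (M.drop r').length = M.length - r' := List.length_drop; rw [h] at this; simp at this; omega
  have htne : M.take r' ≠ [] := by
    intro h; have : (M.take r').length = min r' M.length := List.length_take; rw [h] at this; simp at this; omega
  -- a ∈ M.drop r'
  have haD : a ∈ M.drop r' := by
    have haM : a ∈ M := List.mem_append_left _ ha
    have haM' : a ∈ M.take r' ++ M.drop r' := by rw [List.take_append_drop]; exact haM
    rcases List.mem_append.mp haM' with h | h
    · obtain ⟨x, hx⟩ := List.exists_mem_of_ne_nil _ hdne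
      exact absurd (hDT x hx a h) (not_lt.mpr (hamin x (List.mem_of_mem_drop hx)))
    · exact h
  -- b ∈ M.take r'
  have hbT : b ∈ M.take r' := by
    have hbM : b ∈ M := List.mem_append_right _ hb
    have hbM' : b ∈ M.take r' ++ M.drop r' := by rw [List.take_append_drop]; exact hbM
    rcases List.mem_append.mp hbM' with h | h
    · exact h
    · obtain ⟨y, hy⟩ := List.exists_mem_of_ne_nil _ htne
      exact absurd (hDT b h y hy) (not_lt.mpr (hbmax y (List.mem_of_mem_take hy)))
  -- case split on r' vs A.length
  rcases le_or_gt r' A.length with hle | hgt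
  · -- M.take r' is a prefix of A, so b ∈ A, contradicting disjointness
    have : M.take r' = A.take r' := by
      rw [hM, List.take_append]
      have : r' - A.length = 0 := by omega
      simp [this]
    rw [this] at hbT
    exact hdisj (List.mem_of_mem_take hbT) hb
  · -- M.drop r' ⊆ B, so a ∈ B, contradicting disjointness
    have : M.drop r' = B.drop (r' - A.length) := by
      rw [hM, List.drop_append]
      have : A.drop r' = [] := List.drop_eq_nil_of_le (by omega)
      simp [this]
    rw [this] at haD
    exact hdisj ha (List.mem_of_mem_drop haD)


lemma head_eq_min {x a : Fin n} {l : List (Fin n)} (h : List.Chain' (· < ·) (x :: l))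
    (hmem : a ∈ x :: l) (hmin : ∀ y ∈ x :: l, a ≤ y) : x = a := by
  rcases List.mem_cons.mp hmem with rfl | hm
  · rfl
  · have hx : x < a := List.rel_of_pairwise_cons (List.isChain_iff_pairwise.mp h) hm
    exact absurd (lt_of_lt_of_le hx (hmin x (List.mem_cons_self))) (lt_irrefl x)

lemma head_eq_max {x a : Fin n} {l : List (Fin n)} (h : List.Chain' (· > ·) (x :: l))
    (hmem : a ∈ x :: l) (hmax : ∀ y ∈ x :: l, y ≤ a) : x = a := by
  rcases List.mem_cons.mp hmem with rfl | hm
  · rfl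
  · have hx : a < x := List.rel_of_pairwise_cons (List.isChain_iff_pairwise.mp h) hm
    exact absurd (lt_of_le_of_lt (hmax x (List.mem_cons_self)) hx) (lt_irrefl x)

lemma erase_getLast {l : List (Fin n)} (hnd : l.Nodup) (h : l ≠ []) :
    l.erase (l.getLast h) = l.dropLast := by
  obtain ⟨m, g, rfl⟩ := (List.eq_nil_or_concat l).resolve_left h
  simp only [List.concat_eq_append] at hnd ⊢
  have hgm : g ∉ m := fun hm =>
    List.disjoint_of_nodup_append hnd hm (List.mem_singleton_self _)
  have hgl : (m ++ [g]).getLast (by simp) = g := by simp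
  rw [hgl, List.erase_append_right _ hgm, List.erase_cons_head, List.dropLast_concat]
  simp

lemma sortedCP {R T : List (Fin n)} (hlen : R.length = T.length)
    (hs : List.Chain' (· < ·) (R ++ T.reverse)) : IsCircularPair (R, T) := by
  have hpw := List.isChain_iff_pairwise.mp hs
  have hnd : (R ++ T.reverse).Nodup := hpw.imp ne_of_lt
  refine ⟨hlen, (List.nodup_append.mp hnd).1, ?_, ?_, ⟨0, by rw [List.rotate_zero]; exact hs⟩⟩
  · exact (List.nodup_reverse.mp (List.nodup_append.mp hnd).2.1 : T.Nodup)
  · intro x hx hx2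
    exact List.disjoint_of_nodup_append hnd hx (List.mem_reverse.mpr hx2)

lemma chain'_gt_of_reverse {l : List (Fin n)} (h : List.Chain' (· < ·) l.reverse) :
    List.Chain' (· > ·) l := by
  have := List.isChain_reverse.mp h
  exact this

lemma insPair_eq (hn : 0 < n) {P Q : List (Fin n)} {pq : PrePair n}
    (hPQ : List.Chain' (· < ·) (P ++ Q.reverse))
    (h : InsPair P Q (firstV n hn) (lastV n hn) pq) :
    pq = (firstV n hn :: P, lastV n hn :: Q) ∧
      List.Chain' (· < ·) ((firstV n hn :: P) ++ (lastV n hn :: Q).reverse) := by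
  obtain ⟨l₁, l₂⟩ := pq
  obtain ⟨hc, h1, h2⟩ := h
  simp only at h1 h2 hc ⊢
  have hf1 : firstV n hn ∈ l₁ := h1.mem_iff.mpr (List.mem_cons_self)
  have hl2 : lastV n hn ∈ l₂ := h2.mem_iff.mpr (List.mem_cons_self)
  have hmin : ∀ x ∈ l₁ ++ l₂.reverse, firstV n hn ≤ x := by
    intro x _; simp [firstV, Fin.le_def]
  have hmax : ∀ x ∈ l₁ ++ l₂.reverse, x ≤ lastV n hn := by
    intro x _; simp [lastV, Fin.le_def]; omega
  have hsorted : List.Chain' (· < ·) (l₁ ++ l₂.reverse) :=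
    rot_sorted hf1 hmin (List.mem_reverse.mpr hl2) hmax hc.2.2.2.2
  -- l₁ = firstV :: P
  obtain ⟨x, T, rfl⟩ := List.exists_cons_of_ne_nil (List.ne_nil_of_mem hf1)
  have hxf : x = firstV n hn :=
    head_eq_min (l := T ++ l₂.reverse) (by simpa using hsorted)
      (by simpa using List.mem_append_left l₂.reverse hf1)
      (fun y hy => hmin y (by simpa using hy))
  subst hxf
  have hTP : T.Perm P := h1.cons_inv
  have hTsorted : List.Chain' (· < ·) T :=
    chain'_sublist ((List.sublist_append_left T l₂.reverse).trans
      ((List.sublist_cons_self _ _).append_right l₂.reverse)) hsorted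
  have hPsorted : List.Chain' (· < ·) P :=
    chain'_sublist (List.sublist_append_left P Q.reverse) hPQ
  have hTP' : T = P := sorted_perm_eq hTP hTsorted hPsorted
  -- l₂ = lastV :: Q
  have hgt : List.Chain' (· > ·) (l₂ ++ (firstV n hn :: T).reverse) :=
    chain'_gt_of_reverse (by simpa using hsorted)
  obtain ⟨y, V, rfl⟩ := List.exists_cons_of_ne_nil (List.ne_nil_of_mem hl2)
  have hyl : y = lastV n hn :=
    head_eq_max (l := V ++ (firstV n hn :: T).reverse) (by simpa using hgt)
      (by simpa using List.mem_append_left (firstV n hn :: T).reverse hl2)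
      (fun z _ => by simp only [lastV, Fin.le_def]; omega)
  subst hyl
  have hVQ : V.Perm Q := h2.cons_inv
  have hVsorted : List.Chain' (· > ·) V :=
    chain'_sublist ((List.sublist_append_left V (firstV n hn :: T).reverse).trans
      ((List.sublist_cons_self _ _).append_right _)) hgt
  have hQsorted : List.Chain' (· > ·) Q :=
    chain'_gt_of_reverse (by simpa using
      (chain'_sublist (List.sublist_append_right P Q.reverse) hPQ))
  have hVQ' : V = Q := sorted_perm_eq' hVQ hVsorted hQsorted
  subst hTP' hVQ'
  exact ⟨rfl, hsorted⟩

lemma singles {S : Set (CircPair n)} (hS : ElectricalPositroid n S) (d : Fin n) :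
    ∀ N (R T : List (Fin n)), R.length = N → T.length = N →
      List.Chain' (· < ·) (R ++ T.reverse) → cp (R, T) ∈ S →
      ∀ j, j < N → cp (([R.getD j d], [T.getD j d]) : PrePair n) ∈ S := by
  intro N
  induction N with
  | zero => intro R T _ _ _ _ j hj; omega
  | succ N ih =>
    intro R T hR hT hs hmem j hj
    obtain ⟨r, R', rfl⟩ := List.exists_cons_of_ne_nil
      (List.ne_nil_of_length_pos (by omega) : R ≠ [])
    obtain ⟨t, T', rfl⟩ := List.exists_cons_of_ne_nil
      (List.ne_nil_of_length_pos (by omega) : T ≠ [])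
    simp only [List.length_cons, Nat.succ_inj] at hR hT
    rcases Nat.eq_zero_or_pos N with rfl | hN
    · have hR0 : R' = [] := List.eq_nil_of_length_eq_zero hR
      have hT0 : T' = [] := List.eq_nil_of_length_eq_zero hT
      subst hR0; subst hT0
      have hj0 : j = 0 := by omega
      subst hj0
      simpa using hmem
    · have hcirc : IsCircularPair ((r :: R', t :: T') : PrePair n) :=
        sortedCP (by simp [hR, hT]) hs
      match j with
      | 0 =>
        obtain ⟨r2, R'', rfl⟩ := List.exists_cons_of_ne_nil
          (List.ne_nil_of_length_pos (by omega) : R' ≠ [])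
        obtain ⟨t2, T'', rfl⟩ := List.exists_cons_of_ne_nil
          (List.ne_nil_of_length_pos (by omega) : T' ≠ [])
        have h3 := hS.2.2.2.1 _ _ hcirc hmem 1 (by simp)
        simp only [List.eraseIdx] at h3
        have hsub : ((r :: R'') ++ (t :: T'').reverse).Sublist
            ((r :: r2 :: R'') ++ (t :: t2 :: T'').reverse) := by
          refine List.Sublist.append ?_ (List.Sublist.reverse ?_)
          · exact List.Sublist.cons₂ r (List.sublist_cons_self r2 R'')
          · exact List.Sublist.cons₂ t (List.sublist_cons_self t2 T'')
        have := ih (r :: R'') (t :: T'') (by simpa using hR) (by simpa using hT)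
          (chain'_sublist hsub hs) h3 0 (by omega)
        simpa using this
      | (j+1) =>
        have h3 := hS.2.2.2.1 _ _ hcirc hmem 0 (by simp)
        simp only [List.eraseIdx] at h3
        have hsub : (R' ++ T'.reverse).Sublist ((r :: R') ++ (t :: T').reverse) :=
          List.Sublist.append (List.sublist_cons_self r R')
            (List.Sublist.reverse (List.sublist_cons_self t T'))
        have := ih R' T' hR hT (chain'_sublist hsub hs) h3 j (by omega)
        simpa [List.getD_cons_succ] using this

theorem statement_15 (n : ℕ) (hn : 0 < n) (S : Set (CircPair n))
    (hS : ElectricalPositroid n S) (P Q : List (Fin n))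
    (hcp : IsCircularPair ((P, Q) : PrePair n))
    (h1P : firstV n hn ∉ P) (h1Q : firstV n hn ∉ Q)
    (hnP : lastV n hn ∉ P) (hnQ : lastV n hn ∉ Q)
    (hmem : cp ((P, Q) : PrePair n) ∈ S)
    (hinsCP : ∃ pq : PrePair n, InsPair P Q (firstV n hn) (lastV n hn) pq)
    (hincomp : ¬ ∃ pq : PrePair n,
      InsPair P Q (firstV n hn) (lastV n hn) pq ∧ cp pq ∈ S)
    (hmin : ∃ pq : PrePair n,
      InsPair P.dropLast Q.dropLast (firstV n hn) (lastV n hn) pq ∧ cp pq ∈ S) :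
    ∀ i : ℕ, i < P.length →
      cp (([( (firstV n hn :: P).getD i (firstV n hn) )],
           [( (lastV n hn :: Q).getD (i + 1) (firstV n hn) )]) : PrePair n) ∈ S ∧
      cp (([( (firstV n hn :: P).getD (i + 1) (firstV n hn) )],
           [( (lastV n hn :: Q).getD i (firstV n hn) )]) : PrePair n) ∈ S := by
  intro i hi
  set f := firstV n hn with hf
  set v := lastV n hn with hv
  have hPne : P ≠ [] := List.ne_nil_of_length_pos (by omega)
  have hQlen : Q.length = P.length := hcp.1.symm
  have hQne : Q ≠ [] := by
    intro h; rw [h] at hQlen; simp at hQlen; omega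
  obtain ⟨pq0, hpq0⟩ := hinsCP
  have hsorted0 : List.Chain' (· < ·) (pq0.1 ++ pq0.2.reverse) := by
    obtain ⟨hc0, h01, h02⟩ := hpq0
    refine rot_sorted (a := f) (b := v) (h01.mem_iff.mpr (List.mem_cons_self))
      (fun x _ => by simp [hf, firstV, Fin.le_def])
      (List.mem_reverse.mpr (h02.mem_iff.mpr (List.mem_cons_self)))
      (fun x _ => by simp only [hv, lastV, Fin.le_def]; omega) hc0.2.2.2.2
  have hlt : ∀ p ∈ P, ∀ q ∈ Q, p < q := by
    intro p hp q hq
    obtain ⟨hc0, h01, h02⟩ := hpq0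
    exact (List.pairwise_append.mp (List.isChain_iff_pairwise.mp hsorted0)).2.2 p
      (h01.mem_iff.mpr (List.mem_cons_of_mem _ hp))
      q (List.mem_reverse.mpr (h02.mem_iff.mpr (List.mem_cons_of_mem _ hq)))
  obtain ⟨pmin, hpmin, hpminle⟩ := exists_min P hPne
  obtain ⟨qmax, hqmax, hqmaxle⟩ := exists_max Q hQne
  have hPQs : List.Chain' (· < ·) (P ++ Q.reverse) := by
    refine rot_sorted hpmin ?_ (List.mem_reverse.mpr hqmax) ?_ hcp.2.2.2.2
    · intro x hx
      rcases List.mem_append.mp hx with hx | hx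
      · exact hpminle x hx
      · exact (hlt pmin hpmin x (List.mem_reverse.mp hx)).le
    · intro x hx
      rcases List.mem_append.mp hx with hx | hx
      · exact (hlt x hx qmax hqmax).le
      · exact hqmaxle x (List.mem_reverse.mp hx)
  obtain ⟨hpq0eq, hM⟩ := insPair_eq hn hPQs hpq0
  obtain ⟨pq1, hpq1, hpq1S⟩ := hmin
  have hPQs' : List.Chain' (· < ·) (P.dropLast ++ Q.dropLast.reverse) :=
    chain'_sublist (List.Sublist.append (List.dropLast_sublist P)
      (List.Sublist.reverse (List.dropLast_sublist Q))) hPQs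
  obtain ⟨hpq1eq, _⟩ := insPair_eq hn hPQs' hpq1
  rw [hpq1eq] at hpq1S
  set pl := P.getLast hPne with hpl
  set ql := Q.getLast hQne with hql
  have hcircBig : IsCircularPair ((f :: P, v :: Q) : PrePair n) :=
    sortedCP (by simp [hcp.1]) hM
  have hsubP : [f, pl].Sublist (f :: P) :=
    List.Sublist.cons₂ f (List.singleton_sublist.mpr (List.getLast_mem hPne))
  have hsubQ : [v, ql].Sublist (v :: Q) :=
    List.Sublist.cons₂ v (List.singleton_sublist.mpr (List.getLast_mem hQne))
  have hax := hS.2.1 (f :: P) (v :: Q) f pl v ql hcircBig hsubP hsubQ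
  have e1 : (f :: P).erase f = P := List.erase_cons_head f P
  have e2 : (v :: Q).erase v = Q := List.erase_cons_head v Q
  have hplf : ¬ (f == pl) = true := by
    simp only [beq_iff_eq]
    intro h; exact h1P (h ▸ List.getLast_mem hPne)
  have e3 : (f :: P).erase pl = f :: P.dropLast := by
    rw [List.erase_cons_tail hplf, hpl, erase_getLast hcp.2.1 hPne]
  have hqlv : ¬ (v == ql) = true := by
    simp only [beq_iff_eq]
    intro h; exact hnQ (h ▸ List.getLast_mem hQne)
  have e4 : (v :: Q).erase ql = v :: Q.dropLast := by
    rw [List.erase_cons_tail hqlv, hql, erase_getLast hcp.2.2.1 hQne]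
  have hAB := hax.1 ⟨by rw [e1, e2]; exact hmem, by rw [e3, e4]; exact hpq1S⟩
  rcases hAB with ⟨hA', hB'⟩ | ⟨_, hbad⟩
  swap
  · exact absurd ⟨(f :: P, v :: Q), ⟨hcircBig, List.Perm.refl _, List.Perm.refl _⟩, hbad⟩ hincomp
  rw [e1, e4] at hA'
  rw [e3, e2] at hB'
  constructor
  · have hlenB : (f :: P.dropLast).length = P.length := by
      simp [List.length_dropLast]; omega
    have hsB : List.Chain' (· < ·) ((f :: P.dropLast) ++ Q.reverse) := by
      refine chain'_sublist ?_ hM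
      refine List.Sublist.append (List.Sublist.cons₂ f (List.dropLast_sublist P)) ?_
      rw [List.reverse_cons]
      exact List.sublist_append_left _ _
    have hres := singles hS f P.length (f :: P.dropLast) Q hlenB hQlen hsB hB' i hi
    have eR : (f :: P.dropLast).getD i f = (f :: P).getD i f := by
      cases i with
      | zero => rfl
      | succ j =>
        simp only [List.getD_cons_succ]
        have hj : j < P.dropLast.length := by simp [List.length_dropLast]; omega
        rw [List.getD_eq_getElem _ _ hj, List.getD_eq_getElem _ _ (by omega : j < P.length),
          List.getElem_dropLast]
    have eT : Q.getD i f = (v :: Q).getD (i+1) f := (List.getD_cons_succ).symm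
    rw [eR, eT] at hres
    exact hres
  · have hlenA : (v :: Q.dropLast).length = P.length := by
      simp [List.length_dropLast]; omega
    have hsA : List.Chain' (· < ·) (P ++ (v :: Q.dropLast).reverse) := by
      refine chain'_sublist ?_ hM
      refine List.Sublist.append (List.sublist_cons_self f P) ?_
      rw [List.reverse_cons, List.reverse_cons]
      exact List.Sublist.append (List.Sublist.reverse (List.dropLast_sublist Q))
        (List.Sublist.refl _)
    have hres := singles hS f P.length P (v :: Q.dropLast) rfl hlenA hsA hA' i hi
    have eT : (v :: Q.dropLast).getD i f = (v :: Q).getD i f := by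
      cases i with
      | zero => rfl
      | succ j =>
        simp only [List.getD_cons_succ]
        have hj : j < Q.dropLast.length := by simp [List.length_dropLast]; omega
        rw [List.getD_eq_getElem _ _ hj, List.getD_eq_getElem _ _ (by omega : j < Q.length),
          List.getElem_dropLast]
    have eR : P.getD i f = (f :: P).getD (i+1) f := (List.getD_cons_succ).symm
    rw [eR, eT] at hres
    exact hres

end CircularPlanar
end
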